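/- arXiv:2511.05396 — 9 statements merged into one kernel-verified Lean document; each statement's English description precedes it below -/
import Mathlib

section
/- Let S be a finite set, P° a probability distribution on S, V : S → [0, H] a bounded function, and ρ > 0. Then inf over probability distributions P on S with TV(P, P°) ≤ ρ of E_P[V] equals −inf over η ∈ [0, H] of ( E_{P°}[(η − V(s))₊] + ρ·(η − min_{s∈S} V(s))₊ − η ), where (x)₊ = max(x,0). -/
open Finset Real

private lemma max_add_abs (x : ℝ) : max x 0 = (x + |x|) / 2 := by
  rcases le_total x 0 with h | h
  · rw [max_eq_right h, abs_of_nonpos h]; ring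
  · rw [max_eq_left h, abs_of_nonneg h]; ring

private lemma weak_duality {S : Type*} [Fintype S]
    (P Q V : S → ℝ) (ρ η m : ℝ)
    (hQ : ∀ s, 0 ≤ Q s)
    (hP1 : ∑ s, P s = 1) (hQ1 : ∑ s, Q s = 1)
    (hTV : (1/2) * (∑ s, |Q s - P s|) ≤ ρ)
    (hm : ∀ s, m ≤ V s) :
    η - ((∑ s, P s * max (η - V s) 0) + ρ * max (η - m) 0) ≤ ∑ s, Q s * V s := by
  have hmax : ∀ s, max (η - V s) 0 ≤ max (η - m) 0 :=
    fun s => max_le_max (by linarith [hm s]) le_rfl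
  have h1 : ∀ s, Q s * η - Q s * max (η - V s) 0 ≤ Q s * V s := by
    intro s
    have h : η - max (η - V s) 0 ≤ V s := by
      rcases le_total (η - V s) 0 with h | h
      · rw [max_eq_right h]; linarith
      · rw [max_eq_left h]; linarith
    nlinarith [hQ s, h]
  have h2 : ∀ s, Q s * max (η - V s) 0 - P s * max (η - V s) 0
      ≤ max (Q s - P s) 0 * max (η - m) 0 := by
    intro s
    have h3 : (Q s - P s) * max (η - V s) 0 ≤ max (Q s - P s) 0 * max (η - V s) 0 :=
      mul_le_mul_of_nonneg_right (le_max_left _ _) (le_max_right _ _)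
    have h4 : max (Q s - P s) 0 * max (η - V s) 0 ≤ max (Q s - P s) 0 * max (η - m) 0 :=
      mul_le_mul_of_nonneg_left (hmax s) (le_max_right _ _)
    nlinarith [h3, h4]
  have hplus : ∑ s, max (Q s - P s) 0 ≤ ρ := by
    have e1 : ∑ s, max (Q s - P s) 0 = ∑ s, ((Q s - P s) + |Q s - P s|) / 2 :=
      Finset.sum_congr rfl fun s _ => max_add_abs _
    have e2 : ∑ s, (Q s - P s) = 0 := by
      rw [Finset.sum_sub_distrib, hP1, hQ1]; ring
    have e3 : ∑ s, ((Q s - P s) + |Q s - P s|) / 2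
        = ((∑ s, (Q s - P s)) + ∑ s, |Q s - P s|) / 2 := by
      rw [← Finset.sum_add_distrib, ← Finset.sum_div]
    rw [e1, e3, e2]
    linarith
  have hsum1 : ∑ s, (Q s * η - Q s * max (η - V s) 0) ≤ ∑ s, Q s * V s :=
    Finset.sum_le_sum fun s _ => h1 s
  have hsum2 : ∑ s, (Q s * max (η - V s) 0 - P s * max (η - V s) 0)
      ≤ (∑ s, max (Q s - P s) 0) * max (η - m) 0 := by
    rw [Finset.sum_mul]
    exact Finset.sum_le_sum fun s _ => h2 s
  have hsum3 : (∑ s, max (Q s - P s) 0) * max (η - m) 0 ≤ ρ * max (η - m) 0 :=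
    mul_le_mul_of_nonneg_right hplus (le_max_right _ _)
  have e4 : ∑ s, (Q s * η - Q s * max (η - V s) 0)
      = η - ∑ s, Q s * max (η - V s) 0 := by
    rw [Finset.sum_sub_distrib, ← Finset.sum_mul, hQ1, one_mul]
  have e5 : ∑ s, (Q s * max (η - V s) 0 - P s * max (η - V s) 0)
      = (∑ s, Q s * max (η - V s) 0) - ∑ s, P s * max (η - V s) 0 :=
    Finset.sum_sub_distrib _ _
  rw [e4] at hsum1
  rw [e5] at hsum2
  linarith

set_option maxHeartbeats 1000000 in
/-- Dual formulation of the TV-constrained robust expectation (CRMDP-TV). -/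
theorem tv_constrained_dual
    {S : Type*} [Fintype S] [Nonempty S]
    (P : S → ℝ) (hP : ∀ s, 0 ≤ P s) (hP1 : ∑ s, P s = 1)
    (H ρ : ℝ) (hH : 0 < H) (hρ : 0 < ρ)
    (V : S → ℝ) (hV : ∀ s, V s ∈ Set.Icc (0:ℝ) H) :
    sInf {x : ℝ | ∃ Q : S → ℝ, (∀ s, 0 ≤ Q s) ∧ (∑ s, Q s = 1) ∧
        (1/2) * (∑ s, |Q s - P s|) ≤ ρ ∧ x = ∑ s, Q s * V s}
      = - sInf {y : ℝ | ∃ η ∈ Set.Icc (0:ℝ) H,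
          y = (∑ s, P s * max (η - V s) 0) + ρ * max (η - ⨅ s, V s) 0 - η} := by
  classical
  -- the minimum of V
  obtain ⟨s0, -, hs0⟩ := Finset.exists_min_image Finset.univ V univ_nonempty
  set m := V s0 with hm_def
  have hs0' : ∀ s, m ≤ V s := fun s => hs0 s (mem_univ s)
  have hmi : (⨅ s, V s) = m :=
    le_antisymm (ciInf_le (Set.Finite.bddBelow (Set.finite_range V)) s0) (le_ciInf hs0')
  have hm0 : 0 ≤ m := (hV s0).1
  simp only [hmi]
  -- the quantile η
  set F : ℝ → ℝ := fun a => ∑ s, if V s ≤ a then P s else 0 with hF_def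
  have hF0 : ∀ a, 0 ≤ F a := fun a =>
    Finset.sum_nonneg fun s _ => by split_ifs; exacts [hP s, le_rfl]
  have hAne : (univ.filter (fun s => 1 - ρ ≤ F (V s))).Nonempty := by
    obtain ⟨s2, -, hs2⟩ := Finset.exists_max_image Finset.univ V univ_nonempty
    refine ⟨s2, Finset.mem_filter.mpr ⟨mem_univ _, ?_⟩⟩
    have e : F (V s2) = ∑ s, P s :=
      Finset.sum_congr rfl fun s _ => if_pos (hs2 s (mem_univ s))
    rw [e, hP1]; linarith
  obtain ⟨s1, hs1A, hs1min⟩ :=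
    Finset.exists_min_image (univ.filter (fun s => 1 - ρ ≤ F (V s))) V hAne
  set η := V s1 with hη_def
  have hFη : 1 - ρ ≤ F η := (Finset.mem_filter.mp hs1A).2
  have hη0 : 0 ≤ η := (hV s1).1
  have hηH : η ≤ H := (hV s1).2
  have hmη : m ≤ η := hs0' s1
  have hs1min' : ∀ s, 1 - ρ ≤ F (V s) → η ≤ V s := fun s h =>
    hs1min s (Finset.mem_filter.mpr ⟨mem_univ s, h⟩)
  -- partition masses
  set Fm : ℝ := ∑ s, if V s < η then P s else 0 with hFm_def
  set pL : ℝ := ∑ s, if V s = η then P s else 0 with hpL_def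
  set pP : ℝ := ∑ s, if η < V s then P s else 0 with hpP_def
  have hFm0 : 0 ≤ Fm := Finset.sum_nonneg fun s _ => by split_ifs; exacts [hP s, le_rfl]
  have hpL0 : 0 ≤ pL := Finset.sum_nonneg fun s _ => by split_ifs; exacts [hP s, le_rfl]
  have hpP0 : 0 ≤ pP := Finset.sum_nonneg fun s _ => by split_ifs; exacts [hP s, le_rfl]
  have hpart : Fm + pL + pP = 1 := by
    rw [hFm_def, hpL_def, hpP_def, ← Finset.sum_add_distrib, ← Finset.sum_add_distrib, ← hP1]
    refine Finset.sum_congr rfl fun s _ => ?_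
    rcases lt_trichotomy (V s) η with h | h | h
    · rw [if_pos h, if_neg (ne_of_lt h), if_neg (not_lt.mpr h.le)]; ring
    · rw [if_neg (by rw [h]; exact lt_irrefl η), if_pos h, if_neg (by rw [h]; exact lt_irrefl η)]
      ring
    · rw [if_neg (not_lt.mpr h.le), if_neg (ne_of_gt h), if_pos h]; ring
  have hFsplit : F η = Fm + pL := by
    rw [hF_def, hFm_def, hpL_def, ← Finset.sum_add_distrib]
    refine Finset.sum_congr rfl fun s _ => ?_
    rcases lt_trichotomy (V s) η with h | h | h
    · rw [if_pos h.le, if_pos h, if_neg (ne_of_lt h)]; ring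
    · rw [if_pos h.le, if_neg (by rw [h]; exact lt_irrefl η), if_pos h]; ring
    · rw [if_neg (not_le.mpr h), if_neg (not_lt.mpr h.le), if_neg (ne_of_gt h)]; ring
  have hpPρ : pP ≤ ρ := by
    rw [hFsplit] at hFη; linarith
  have hFm_le : ρ ≤ 1 → Fm ≤ 1 - ρ := by
    intro hρ1
    by_contra hcon
    push_neg at hcon
    have hBne : (univ.filter (fun s => V s < η)).Nonempty := by
      by_contra hB
      rw [Finset.not_nonempty_iff_eq_empty] at hB
      have : Fm = 0 := by
        rw [hFm_def]
        refine Finset.sum_eq_zero fun s _ => if_neg fun h => ?_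
        exact absurd (Finset.mem_filter.mpr ⟨mem_univ s, h⟩) (by rw [hB]; exact notMem_empty s)
      linarith
    obtain ⟨s2, hs2B, hs2max⟩ :=
      Finset.exists_max_image (univ.filter (fun s => V s < η)) V hBne
    have hs2η : V s2 < η := (Finset.mem_filter.mp hs2B).2
    have hle : Fm ≤ F (V s2) := by
      refine Finset.sum_le_sum fun s _ => ?_
      split_ifs with h h2 h2
      · exact le_rfl
      · exact absurd (hs2max s (Finset.mem_filter.mpr ⟨mem_univ s, h⟩)) h2
      · exact hP s
      · exact le_rfl
    have : 1 - ρ ≤ F (V s2) := by linarith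
    exact absurd (hs1min' s2 this) (not_le.mpr hs2η)
  have hcase : ρ ≤ 1 ∨ η = m := by
    rcases le_total ρ 1 with h | h
    · exact Or.inl h
    · refine Or.inr (le_antisymm (hs1min' s0 ?_) hmη)
      have := hF0 (V s0)
      linarith
  set R : ℝ := min ρ 1 with hR_def
  have hR0 : 0 < R := lt_min hρ one_pos
  have hRρ : R ≤ ρ := min_le_left _ _
  have hR1 : R ≤ 1 := min_le_right _ _
  have hpPR : pP ≤ R := le_min hpPρ (by linarith)
  have hFm_zero : η = m → Fm = 0 := by
    intro h
    rw [hFm_def]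
    exact Finset.sum_eq_zero fun s _ => if_neg (not_lt.mpr (h ▸ hs0' s))
  have hcpL : R - pP ≤ pL := by
    rcases hcase with h | h
    · have := hFm_le h
      have hRe : R = ρ := hR_def.trans (min_eq_left h)
      linarith
    · have := hFm_zero h
      linarith
  set θ : ℝ := if pL = 0 then 0 else (R - pP) / pL with hθ_def
  have hθ0 : 0 ≤ θ := by
    rw [hθ_def]; split_ifs with h
    · exact le_rfl
    · exact div_nonneg (by linarith) hpL0
  have hθ1 : θ ≤ 1 := by
    rw [hθ_def]; split_ifs with h
    · exact zero_le_one
    · exact (div_le_one (lt_of_le_of_ne hpL0 (Ne.symm h))).mpr hcpL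
  have hθpL : θ * pL = R - pP := by
    rw [hθ_def]; split_ifs with h
    · have h1 : R - pP ≤ 0 := h ▸ hcpL
      have h2 : 0 ≤ R - pP := by linarith [hpPR]
      rw [h]
      simp
      linarith
    · exact div_mul_cancel₀ _ h
  -- the optimal distribution
  set Q : S → ℝ := fun s => P s - (if η < V s then P s else 0)
      - (if V s = η then θ * P s else 0) + (if s = s0 then R else 0) with hQ_def
  have hind0 : ∀ s : S, 0 ≤ (if s = s0 then R else (0:ℝ)) := by
    intro s; split_ifs; exacts [hR0.le, le_rfl]
  have hQ0 : ∀ s, 0 ≤ Q s := by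
    intro s
    simp only [hQ_def]
    rcases lt_trichotomy (V s) η with h | h | h
    · rw [if_neg (not_lt.mpr h.le), if_neg (ne_of_lt h)]
      have := hP s; have := hind0 s; linarith
    · rw [if_neg (by rw [h]; exact lt_irrefl η), if_pos h]
      have h1 := hP s; have h2 := hind0 s
      nlinarith [hθ1, hP s]
    · rw [if_pos h, if_neg (ne_of_gt h)]
      have := hind0 s; linarith
  have hsum_ind : ∑ s, (if s = s0 then R else (0:ℝ)) = R := by
    rw [Finset.sum_ite_eq' univ s0 (fun _ => R), if_pos (mem_univ s0)]
  have hsum_θ : ∑ s, (if V s = η then θ * P s else 0) = θ * pL := by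
    rw [hpL_def, Finset.mul_sum]
    exact Finset.sum_congr rfl fun s _ => by split_ifs <;> ring
  have hQ1 : ∑ s, Q s = 1 := by
    have e : ∑ s, Q s = (∑ s, P s) - pP - (∑ s, (if V s = η then θ * P s else 0))
        + ∑ s, (if s = s0 then R else (0:ℝ)) := by
      rw [hQ_def, Finset.sum_add_distrib, Finset.sum_sub_distrib, Finset.sum_sub_distrib,
        hpP_def]
    rw [e, hP1, hsum_θ, hsum_ind, hθpL]
    ring
  have hTV : (1/2) * (∑ s, |Q s - P s|) ≤ ρ := by
    have hbound : ∀ s, |Q s - P s| ≤ (if η < V s then P s else 0)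
        + (if V s = η then θ * P s else 0) + (if s = s0 then R else 0) := by
      intro s
      have ha : 0 ≤ (if η < V s then P s else (0:ℝ)) := by
        split_ifs; exacts [hP s, le_rfl]
      have hb : 0 ≤ (if V s = η then θ * P s else (0:ℝ)) := by
        split_ifs; exacts [mul_nonneg hθ0 (hP s), le_rfl]
      have hd := hind0 s
      have hQs : Q s - P s = -(if η < V s then P s else 0)
          - (if V s = η then θ * P s else 0) + (if s = s0 then R else 0) := by
        simp only [hQ_def]; ring
      rw [hQs, abs_le]
      constructor <;> linarith
    have hs : ∑ s, |Q s - P s| ≤ pP + θ * pL + R := by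
      calc ∑ s, |Q s - P s|
          ≤ ∑ s, ((if η < V s then P s else 0)
            + (if V s = η then θ * P s else 0) + (if s = s0 then R else 0)) :=
            Finset.sum_le_sum fun s _ => hbound s
        _ = pP + θ * pL + R := by
            rw [Finset.sum_add_distrib, Finset.sum_add_distrib, hsum_θ, hsum_ind, hpP_def]
    rw [hθpL] at hs
    linarith
  -- the value of Q
  set SL : ℝ := ∑ s, if V s < η then P s * V s else 0 with hSL_def
  set SG : ℝ := ∑ s, if η < V s then P s * V s else 0 with hSG_def
  have hPV : ∑ s, P s * V s = SL + η * pL + SG := by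
    rw [hSL_def, hSG_def, hpL_def, Finset.mul_sum, ← Finset.sum_add_distrib,
      ← Finset.sum_add_distrib]
    refine Finset.sum_congr rfl fun s _ => ?_
    rcases lt_trichotomy (V s) η with h | h | h
    · rw [if_pos h, if_neg (ne_of_lt h), if_neg (not_lt.mpr h.le)]; ring
    · rw [if_neg (by rw [h]; exact lt_irrefl η), if_pos h, if_neg (by rw [h]; exact lt_irrefl η)]
      rw [h]; ring
    · rw [if_neg (not_lt.mpr h.le), if_neg (ne_of_gt h), if_pos h]; ring
  have hQV : ∑ s, Q s * V s = SL + η * pL - (R - pP) * η + R * m := by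
    have epoint : ∀ s : S, Q s * V s = P s * V s - (if η < V s then P s * V s else 0)
        - (if V s = η then θ * P s * η else 0) + (if s = s0 then R * m else 0) := by
      intro s
      have e1 : (if η < V s then P s else 0) * V s = (if η < V s then P s * V s else 0) := by
        split_ifs <;> ring
      have e2 : (if V s = η then θ * P s else 0) * V s
          = (if V s = η then θ * P s * η else 0) := by
        split_ifs with h
        · rw [h]
        · ring
      have e3 : (if s = s0 then R else (0:ℝ)) * V s = (if s = s0 then R * m else 0) := by
        split_ifs with h
        · rw [h, hm_def]
        · ring
      simp only [hQ_def]
      rw [← e1, ← e2, ← e3]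
      ring
    have e : ∑ s, Q s * V s = (∑ s, P s * V s) - SG
        - (∑ s, (if V s = η then θ * P s * η else 0))
        + ∑ s, (if s = s0 then R * m else (0:ℝ)) := by
      calc ∑ s, Q s * V s
          = ∑ s, (P s * V s - (if η < V s then P s * V s else 0)
              - (if V s = η then θ * P s * η else 0) + (if s = s0 then R * m else 0)) :=
            Finset.sum_congr rfl fun s _ => epoint s
        _ = _ := by
            rw [Finset.sum_add_distrib, Finset.sum_sub_distrib, Finset.sum_sub_distrib, hSG_def]
    have eθ : ∑ s, (if V s = η then θ * P s * η else 0) = θ * η * pL := by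
      rw [hpL_def, Finset.mul_sum]
      exact Finset.sum_congr rfl fun s _ => by split_ifs <;> ring
    have eind : ∑ s, (if s = s0 then R * m else (0:ℝ)) = R * m := by
      rw [Finset.sum_ite_eq' univ s0 (fun _ => R * m), if_pos (mem_univ s0)]
    have eθ2 : θ * η * pL = (R - pP) * η := by
      rw [mul_comm θ η, mul_assoc, hθpL]; ring
    rw [e, eθ, eind, hPV]
    linear_combination -eθ2
  have hPmax : ∑ s, P s * max (η - V s) 0 = η * Fm - SL := by
    have e : ∑ s, P s * max (η - V s) 0 = ∑ s, if V s < η then P s * (η - V s) else 0 := by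
      refine Finset.sum_congr rfl fun s _ => ?_
      rcases lt_or_ge (V s) η with h | h
      · rw [if_pos h, max_eq_left (by linarith)]
      · rw [if_neg (not_lt.mpr h), max_eq_right (by linarith), mul_zero]
    rw [e, hFm_def, hSL_def, Finset.mul_sum, ← Finset.sum_sub_distrib]
    exact Finset.sum_congr rfl fun s _ => by split_ifs <;> ring
  have hkey : (ρ - R) * (η - m) = 0 := by
    rcases hcase with h | h
    · have : R = ρ := hR_def.trans (min_eq_left h)
      rw [this]; ring
    · rw [h]; ring
  have hmaxm : max (η - m) 0 = η - m := max_eq_left (by linarith)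
  have hval : ∑ s, Q s * V s
      = η - ((∑ s, P s * max (η - V s) 0) + ρ * max (η - m) 0) := by
    rw [hQV, hPmax, hmaxm]
    linear_combination η * hpart + hkey
  -- nonemptiness and boundedness
  set X := {x : ℝ | ∃ Q : S → ℝ, (∀ s, 0 ≤ Q s) ∧ (∑ s, Q s = 1) ∧
      (1/2) * (∑ s, |Q s - P s|) ≤ ρ ∧ x = ∑ s, Q s * V s} with hX_def
  set D := {y : ℝ | ∃ η ∈ Set.Icc (0:ℝ) H,
      y = (∑ s, P s * max (η - V s) 0) + ρ * max (η - m) 0 - η} with hD_def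
  have hxmem : (∑ s, Q s * V s) ∈ X := ⟨Q, hQ0, hQ1, hTV, rfl⟩
  set ystar : ℝ := (∑ s, P s * max (η - V s) 0) + ρ * max (η - m) 0 - η with hystar_def
  have hymem : ystar ∈ D := ⟨η, ⟨hη0, hηH⟩, rfl⟩
  have hXbdd : BddBelow X := by
    refine ⟨0, fun x hx => ?_⟩
    obtain ⟨Q', hQ'0, -, -, hx⟩ := hx
    rw [hx]
    exact Finset.sum_nonneg fun s _ => mul_nonneg (hQ'0 s) (hV s).1
  have hDbdd : BddBelow D := by
    refine ⟨-H, fun y hy => ?_⟩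
    obtain ⟨η', hη', hy⟩ := hy
    rw [hy]
    have h1 : 0 ≤ ∑ s, P s * max (η' - V s) 0 :=
      Finset.sum_nonneg fun s _ => mul_nonneg (hP s) (le_max_right _ _)
    have h2 : 0 ≤ ρ * max (η' - m) 0 := mul_nonneg hρ.le (le_max_right _ _)
    have := hη'.2
    linarith
  have hprimal : sInf X = ∑ s, Q s * V s := by
    refine le_antisymm (csInf_le hXbdd hxmem) (le_csInf ⟨_, hxmem⟩ ?_)
    rintro x ⟨Q', hQ'0, hQ'1, hQ'TV, hx⟩
    rw [hx, hval]
    exact weak_duality P Q' V ρ η m hQ'0 hP1 hQ'1 hQ'TV hs0'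
  have hdual : sInf D = ystar := by
    refine le_antisymm (csInf_le hDbdd hymem) (le_csInf ⟨_, hymem⟩ ?_)
    rintro y ⟨η', hη', hy⟩
    have hw := weak_duality P Q V ρ η' m hQ0 hP1 hQ1 hTV hs0'
    rw [hval] at hw
    rw [hy, hystar_def]
    linarith
  rw [hprimal, hdual, hystar_def, hval]
  ring
end

section
/- Let S be a finite set, P° a probability distribution on S with full support, V : S → [0, H] bounded, and ρ > 0. Then inf over probability distributions P ≪ P° with KL(P‖P°) ≤ ρ of E_P[V] equals −inf over ν ∈ [0, H/ρ] of ( ν·ln E_{P°}[exp(−V/ν)] + ν·ρ ), with the convention that at ν = 0 the expression ν·ln E_{P°}[exp(−V/ν)] equals −min_{s: P°(s)>0} V(s). -/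
open Finset Real

/-- Gibbs / log-sum inequality. -/
lemma gibbs_aux {S : Type*} [Fintype S] [Nonempty S] (Q R : S → ℝ)
    (hQ0 : ∀ s, 0 ≤ Q s) (hQ1 : ∑ s, Q s = 1) (hR : ∀ s, 0 < R s) :
    ∑ s, Q s * Real.log (R s / Q s) ≤ Real.log (∑ s, R s) := by
  set Z := ∑ s, R s with hZdef
  have hZ : 0 < Z := Finset.sum_pos (fun s _ => hR s) univ_nonempty
  have key : ∀ s, Q s * Real.log (R s / Q s) ≤ Q s * Real.log Z + (R s / Z - Q s) := by
    intro s
    rcases eq_or_lt_of_le (hQ0 s) with h | h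
    · rw [← h]
      simp only [zero_mul, zero_add, sub_zero]
      exact div_nonneg (hR s).le hZ.le
    · have h1 : Real.log (R s / (Q s * Z)) ≤ R s / (Q s * Z) - 1 :=
        Real.log_le_sub_one_of_pos (div_pos (hR s) (mul_pos h hZ))
      have h2 : Real.log (R s / (Q s * Z)) = Real.log (R s / Q s) - Real.log Z := by
        rw [div_mul_eq_div_div, Real.log_div (by exact (div_pos (hR s) h).ne') hZ.ne']
      rw [h2] at h1
      have h3 : Q s * (Real.log (R s / Q s) - Real.log Z) ≤ Q s * (R s / (Q s * Z) - 1) :=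
        mul_le_mul_of_nonneg_left h1 (le_of_lt h)
      have h4 : Q s * (R s / (Q s * Z)) = R s / Z := by
        field_simp
      nlinarith [h3, h4]
  calc ∑ s, Q s * Real.log (R s / Q s)
      ≤ ∑ s, (Q s * Real.log Z + (R s / Z - Q s)) := Finset.sum_le_sum (fun s _ => key s)
    _ = Real.log Z := by
        rw [Finset.sum_add_distrib, Finset.sum_sub_distrib, ← Finset.sum_mul, hQ1,
          ← Finset.sum_div, ← hZdef, div_self hZ.ne']
        ring

/-- Dual formulation of the KL-constrained robust expectation (CRMDP-KL). -/
theorem kl_constrained_dual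
    {S : Type*} [Fintype S] [Nonempty S]
    (P : S → ℝ) (hP : ∀ s, 0 < P s) (hP1 : ∑ s, P s = 1)
    (H ρ : ℝ) (hH : 0 < H) (hρ : 0 < ρ)
    (V : S → ℝ) (hV : ∀ s, V s ∈ Set.Icc (0:ℝ) H) :
    sInf {x : ℝ | ∃ Q : S → ℝ, (∀ s, 0 ≤ Q s) ∧ (∑ s, Q s = 1) ∧
        (∑ s, Q s * Real.log (Q s / P s)) ≤ ρ ∧ x = ∑ s, Q s * V s}
      = - sInf {y : ℝ | ∃ ν ∈ Set.Icc (0:ℝ) (H / ρ),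
          y = if ν = 0 then -(⨅ s, V s)
              else ν * Real.log (∑ s, P s * Real.exp (-(V s) / ν)) + ν * ρ} := by
  -- notation
  set m := ⨅ s, V s with hm_def
  obtain ⟨s₀, hs₀⟩ := Finite.exists_min V
  have hmV : ∀ s, m ≤ V s := fun s =>
    ciInf_le (Set.Finite.bddBelow (Set.finite_range V)) s
  have hms₀ : m = V s₀ := le_antisymm (hmV s₀) (le_ciInf hs₀)
  have hm0 : 0 ≤ m := hms₀ ▸ (hV s₀).1
  have hmH : m ≤ H := hms₀ ▸ (hV s₀).2
  set f : ℝ → ℝ := fun ν => if ν = 0 then -m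
      else ν * Real.log (∑ s, P s * Real.exp (-(V s) / ν)) + ν * ρ with hf_def
  -- weak duality
  have weak : ∀ Q : S → ℝ, (∀ s, 0 ≤ Q s) → (∑ s, Q s = 1) →
      (∑ s, Q s * Real.log (Q s / P s)) ≤ ρ →
      ∀ ν ∈ Set.Icc (0:ℝ) (H / ρ), -(f ν) ≤ ∑ s, Q s * V s := by
    intro Q hQ0 hQ1 hKL ν hν
    rcases eq_or_lt_of_le hν.1 with h0 | h0
    · -- ν = 0 : reduces to m ≤ E_Q[V]
      rw [hf_def]
      simp only [← h0, if_true, eq_self_iff_true, neg_neg]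
      calc m = ∑ s, Q s * m := by rw [← Finset.sum_mul, hQ1, one_mul]
        _ ≤ ∑ s, Q s * V s :=
            Finset.sum_le_sum fun s _ => mul_le_mul_of_nonneg_left (hmV s) (hQ0 s)
    · -- ν > 0 : Gibbs variational inequality
      have hν0 : ν ≠ 0 := ne_of_gt h0
      rw [hf_def]
      simp only [hν0, if_false]
      set R : S → ℝ := fun s => P s * Real.exp (-(V s)/ν) with hRdef
      have hRpos : ∀ s, 0 < R s := fun s => mul_pos (hP s) (Real.exp_pos _)
      have hgibbs := gibbs_aux Q R hQ0 hQ1 hRpos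
      have hterm : ∀ s, Q s * Real.log (R s / Q s)
          = -(Q s * Real.log (Q s / P s)) - Q s * (V s / ν) := by
        intro s
        rcases eq_or_lt_of_le (hQ0 s) with h | h
        · rw [← h]; ring
        · have e1 : R s / Q s = (P s / Q s) * Real.exp (-(V s)/ν) := by
            rw [hRdef]; ring
          rw [e1, Real.log_mul (div_pos (hP s) h).ne' (Real.exp_ne_zero _), Real.log_exp,
            Real.log_div (hP s).ne' h.ne', Real.log_div h.ne' (hP s).ne']
          field_simp
          ring
      rw [Finset.sum_congr rfl (fun s _ => hterm s), Finset.sum_sub_distrib,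
        Finset.sum_neg_distrib] at hgibbs
      have hE : ∑ s, Q s * (V s / ν) = (∑ s, Q s * V s) / ν := by
        rw [Finset.sum_div]
        exact Finset.sum_congr rfl fun s _ => (mul_div_assoc _ _ _).symm
      rw [hE] at hgibbs
      have h2 := mul_le_mul_of_nonneg_left hgibbs h0.le
      have h3 : ν * ((∑ s, Q s * V s) / ν) = ∑ s, Q s * V s := mul_div_cancel₀ _ hν0
      have h4 : Finset.univ.sum R = ∑ s, R s := rfl
      rw [h4]
      nlinarith [mul_le_mul_of_nonneg_left hKL h0.le]
  -- strong duality : attainment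
  have strong : ∃ ν ∈ Set.Icc (0:ℝ) (H / ρ), ∃ Q : S → ℝ, (∀ s, 0 ≤ Q s) ∧ (∑ s, Q s = 1) ∧
      (∑ s, Q s * Real.log (Q s / P s)) ≤ ρ ∧ (∑ s, Q s * V s) = -(f ν) := by
    classical
    set T : Finset S := Finset.univ.filter (fun s => V s = m) with hTdef
    have hs₀T : s₀ ∈ T := by
      simp only [hTdef, Finset.mem_filter, Finset.mem_univ, true_and]
      exact hms₀.symm
    set p₀ : ℝ := ∑ s ∈ T, P s with hp₀def
    have hp₀pos : 0 < p₀ := Finset.sum_pos (fun s _ => hP s) ⟨s₀, hs₀T⟩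
    have hp₀le : p₀ ≤ 1 := by
      rw [← hP1]
      exact Finset.sum_le_sum_of_subset_of_nonneg (Finset.subset_univ T)
        (fun s _ _ => (hP s).le)
    have hHρpos : 0 < H / ρ := div_pos hH hρ
    by_cases hcase : -Real.log p₀ ≤ ρ
    · -- restriction of P to the argmin set is feasible
      refine ⟨0, ⟨le_refl 0, hHρpos.le⟩, fun s => if s ∈ T then P s / p₀ else 0,
        ?_, ?_, ?_, ?_⟩
      · intro s
        dsimp only
        split_ifs with h
        · exact div_nonneg (hP s).le hp₀pos.le
        · exact le_refl 0
      · rw [Finset.sum_ite_mem, Finset.univ_inter, ← Finset.sum_div, ← hp₀def,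
          div_self hp₀pos.ne']
      · have hterm : ∀ s, (if s ∈ T then P s / p₀ else 0) *
            Real.log ((if s ∈ T then P s / p₀ else 0) / P s)
            = if s ∈ T then (P s / p₀) * (-Real.log p₀) else 0 := by
          intro s
          split_ifs with h
          · congr 1
            have : (P s / p₀) / P s = p₀⁻¹ := by
              rw [div_div, mul_comm p₀ (P s), ← div_div, div_self (hP s).ne', one_div]
            rw [this, Real.log_inv]
          · simp
        rw [Finset.sum_congr rfl (fun s _ => hterm s), Finset.sum_ite_mem,
          Finset.univ_inter, ← Finset.sum_mul, ← Finset.sum_div, ← hp₀def,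
          div_self hp₀pos.ne', one_mul]
        exact hcase
      · have hterm : ∀ s, (if s ∈ T then P s / p₀ else 0) * V s
            = if s ∈ T then (P s / p₀) * m else 0 := by
          intro s
          split_ifs with h
          · have : V s = m := (Finset.mem_filter.mp h).2
            rw [this]
          · simp
        rw [Finset.sum_congr rfl (fun s _ => hterm s), Finset.sum_ite_mem,
          Finset.univ_inter, ← Finset.sum_mul, ← Finset.sum_div, ← hp₀def,
          div_self hp₀pos.ne', one_mul, hf_def]
        simp
    · -- the KL constraint is active: find the tilted distribution via IVT
      push_neg at hcase
      set Z : ℝ → ℝ := fun ν => ∑ s, P s * Real.exp (-(V s)/ν) with hZdef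
      set A : ℝ → ℝ := fun ν => ∑ s, P s * V s * Real.exp (-(V s)/ν) with hAdef
      set K : ℝ → ℝ := fun ν => -(A ν)/(ν * Z ν) - Real.log (Z ν) with hKdef
      have hZpos : ∀ ν, 0 < Z ν := fun ν =>
        Finset.sum_pos (fun s _ => mul_pos (hP s) (Real.exp_pos _)) univ_nonempty
      have hApos : ∀ ν, 0 ≤ A ν := fun ν => Finset.sum_nonneg fun s _ =>
        mul_nonneg (mul_nonneg (hP s).le (hV s).1) (Real.exp_pos _).le
      -- upper bound : K ν ≤ H / ν for ν > 0
      have hKup : ∀ ν : ℝ, 0 < ν → K ν ≤ H / ν := by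
        intro ν hν
        have h1 : -(A ν)/(ν * Z ν) ≤ 0 := by
          apply div_nonpos_of_nonpos_of_nonneg
          · linarith [hApos ν]
          · exact (mul_pos hν (hZpos ν)).le
        have h2 : Real.exp (-H/ν) ≤ Z ν := by
          calc Real.exp (-H/ν) = ∑ s, P s * Real.exp (-H/ν) := by
                rw [← Finset.sum_mul, hP1, one_mul]
            _ ≤ Z ν := Finset.sum_le_sum fun s _ => by
                apply mul_le_mul_of_nonneg_left _ (hP s).le
                exact Real.exp_le_exp.mpr
                  ((div_le_div_iff_of_pos_right hν).mpr (by linarith [(hV s).2]))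
        have h3 : -H/ν ≤ Real.log (Z ν) := by
          calc -H/ν = Real.log (Real.exp (-H/ν)) := (Real.log_exp _).symm
            _ ≤ Real.log (Z ν) := Real.log_le_log (Real.exp_pos _) h2
        have : -Real.log (Z ν) ≤ H/ν := by
          rw [neg_div] at h3
          linarith
        linarith
      -- continuity of K on positive reals
      have hZcont : ContinuousOn Z {ν : ℝ | 0 < ν} := by
        apply continuousOn_finset_sum
        intro s _
        apply ContinuousOn.mul continuousOn_const
        apply Real.continuous_exp.comp_continuousOn
        exact ContinuousOn.div continuousOn_const continuousOn_id
          (fun x hx => ne_of_gt hx)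
      have hAcont : ContinuousOn A {ν : ℝ | 0 < ν} := by
        apply continuousOn_finset_sum
        intro s _
        apply ContinuousOn.mul continuousOn_const
        apply Real.continuous_exp.comp_continuousOn
        exact ContinuousOn.div continuousOn_const continuousOn_id
          (fun x hx => ne_of_gt hx)
      have hKcont : ContinuousOn K {ν : ℝ | 0 < ν} := by
        apply ContinuousOn.sub
        · exact ContinuousOn.div hAcont.neg
            (ContinuousOn.mul continuousOn_id hZcont)
            (fun x hx => mul_ne_zero (ne_of_gt hx) (hZpos x).ne')
        · exact hZcont.log (fun x hx => (hZpos x).ne')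
      -- the set U of non-minimizers is nonempty
      set U : Finset S := Finset.univ.filter (fun s => ¬ (V s = m)) with hUdef
      have hUne : U.Nonempty := by
        by_contra hcon
        rw [Finset.not_nonempty_iff_eq_empty] at hcon
        have hTuniv : T = Finset.univ := by
          rw [Finset.eq_univ_iff_forall]
          intro s
          by_contra hs
          have : s ∈ U := by
            simp only [hUdef, Finset.mem_filter, Finset.mem_univ, true_and]
            intro h
            exact hs (by simp [hTdef, h])
          rw [hcon] at this
          exact absurd this (Finset.notMem_empty s)
        rw [hp₀def, hTuniv, hP1] at hcase
        simp at hcase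
        linarith
      -- minimal gap δ
      obtain ⟨δ, hδmem, hδmin⟩ : ∃ δ, (δ ∈ U.image fun s => V s - m) ∧
          ∀ b ∈ U.image (fun s => V s - m), δ ≤ b :=
        ⟨_, (U.image _).min'_mem (hUne.image _), fun b hb => Finset.min'_le _ b hb⟩
      have hδpos : 0 < δ := by
        obtain ⟨s₁, hs₁U, hs₁⟩ := Finset.mem_image.mp hδmem
        have hV1 : V s₁ ≠ m := (Finset.mem_filter.mp hs₁U).2
        have := hmV s₁
        rw [← hs₁]
        cases lt_or_eq_of_le this with
        | inl h => linarith
        | inr h => exact absurd h.symm hV1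
      have hδle : ∀ s ∈ U, δ ≤ V s - m := fun s hs =>
        hδmin _ (Finset.mem_image_of_mem _ hs)
      -- lower bound for K near zero
      have hKlow : ∀ ν : ℝ, 0 < ν →
          -(H * Real.exp (-δ/ν))/(ν*p₀) - Real.log (p₀ + Real.exp (-δ/ν)) ≤ K ν := by
        intro ν hν
        have hνne : ν ≠ 0 := hν.ne'
        set E : ℝ := Real.exp (-m/ν) with hEdef
        have hEpos : 0 < E := Real.exp_pos _
        set et : S → ℝ := fun s => Real.exp (-(V s - m)/ν) with hetdef
        have hetpos : ∀ s, 0 < et s := fun s => Real.exp_pos _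
        have hfactor : ∀ s, Real.exp (-(V s)/ν) = E * et s := by
          intro s
          rw [hEdef, hetdef, ← Real.exp_add]
          congr 1
          field_simp
          ring
        set Zt : ℝ := ∑ s, P s * et s with hZtdef
        set At : ℝ := ∑ s, P s * V s * et s with hAtdef
        set Bt : ℝ := ∑ s, P s * (V s - m) * et s with hBtdef
        have hZtpos : 0 < Zt :=
          Finset.sum_pos (fun s _ => mul_pos (hP s) (hetpos s)) univ_nonempty
        have hZfac : Z ν = E * Zt := by
          have hz : Z ν = ∑ s, P s * Real.exp (-(V s)/ν) := rfl
          rw [hz, Finset.mul_sum]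
          exact Finset.sum_congr rfl fun s _ => by rw [hfactor s]; ring
        have hAfac : A ν = E * At := by
          have ha : A ν = ∑ s, P s * V s * Real.exp (-(V s)/ν) := rfl
          rw [ha, Finset.mul_sum]
          exact Finset.sum_congr rfl fun s _ => by rw [hfactor s]; ring
        -- split the sums according to T and U
        have hetδ : ∀ s ∈ U, et s ≤ Real.exp (-δ/ν) := by
          intro s hs
          apply Real.exp_le_exp.mpr
          apply (div_le_div_iff_of_pos_right hν).mpr
          have := hδle s hs
          linarith
        have hZtsplit : Zt = p₀ + ∑ s ∈ U, P s * et s := by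
          rw [hZtdef, ← Finset.sum_filter_add_sum_filter_not Finset.univ
            (fun s => V s = m) (fun s => P s * et s)]
          congr 1
          rw [← hTdef, hp₀def]
          apply Finset.sum_congr rfl
          intro s hs
          have hVm : V s = m := (Finset.mem_filter.mp hs).2
          rw [hetdef]
          simp [hVm]
        have hW0 : 0 ≤ ∑ s ∈ U, P s * et s :=
          Finset.sum_nonneg fun s _ => (mul_pos (hP s) (hetpos s)).le
        have hUP1 : ∑ s ∈ U, P s ≤ 1 := by
          rw [← hP1]
          exact Finset.sum_le_sum_of_subset_of_nonneg (Finset.subset_univ U)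
            (fun s _ _ => (hP s).le)
        have hWle : ∑ s ∈ U, P s * et s ≤ Real.exp (-δ/ν) := by
          calc ∑ s ∈ U, P s * et s ≤ ∑ s ∈ U, P s * Real.exp (-δ/ν) :=
                Finset.sum_le_sum fun s hs =>
                  mul_le_mul_of_nonneg_left (hetδ s hs) (hP s).le
            _ = (∑ s ∈ U, P s) * Real.exp (-δ/ν) := by rw [Finset.sum_mul]
            _ ≤ 1 * Real.exp (-δ/ν) :=
                mul_le_mul_of_nonneg_right hUP1 (Real.exp_pos _).le
            _ = Real.exp (-δ/ν) := one_mul _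
        have hBtU : Bt = ∑ s ∈ U, P s * (V s - m) * et s := by
          rw [hBtdef, ← Finset.sum_filter_add_sum_filter_not Finset.univ
            (fun s => V s = m) (fun s => P s * (V s - m) * et s)]
          have hzero : ∑ s ∈ Finset.univ.filter (fun s => V s = m),
              P s * (V s - m) * et s = 0 := by
            apply Finset.sum_eq_zero
            intro s hs
            have hVm : V s = m := (Finset.mem_filter.mp hs).2
            rw [hVm]
            ring
          rw [hzero, zero_add]
        have hBt0 : 0 ≤ Bt := by
          rw [hBtdef]
          apply Finset.sum_nonneg
          intro s _
          have := hmV s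
          have h1 : 0 ≤ P s * (V s - m) := mul_nonneg (hP s).le (by linarith)
          exact mul_nonneg h1 (hetpos s).le
        have hBtle : Bt ≤ H * Real.exp (-δ/ν) := by
          rw [hBtU]
          calc ∑ s ∈ U, P s * (V s - m) * et s
              ≤ ∑ s ∈ U, P s * H * Real.exp (-δ/ν) := by
                apply Finset.sum_le_sum
                intro s hs
                have h1 : V s - m ≤ H := by linarith [(hV s).2, hm0]
                have h2 : 0 ≤ V s - m := by linarith [hmV s]
                apply mul_le_mul
                · exact mul_le_mul_of_nonneg_left h1 (hP s).le
                · exact hetδ s hs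
                · exact (hetpos s).le
                · exact mul_nonneg (hP s).le hH.le
            _ = (∑ s ∈ U, P s) * (H * Real.exp (-δ/ν)) := by
                rw [Finset.sum_mul]
                exact Finset.sum_congr rfl fun s _ => by ring
            _ ≤ 1 * (H * Real.exp (-δ/ν)) :=
                mul_le_mul_of_nonneg_right hUP1
                  (mul_nonneg hH.le (Real.exp_pos _).le)
            _ = H * Real.exp (-δ/ν) := one_mul _
        have hmZt : m * Zt - At = -Bt := by
          rw [hZtdef, hAtdef, hBtdef, Finset.mul_sum, ← Finset.sum_sub_distrib,
            ← Finset.sum_neg_distrib]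
          exact Finset.sum_congr rfl fun s _ => by ring
        have hlogE : Real.log E = -m/ν := by rw [hEdef, Real.log_exp]
        have hc : -(E * At) / (ν * (E * Zt)) = -At / (ν * Zt) := by
          rw [show ν * (E * Zt) = E * (ν * Zt) by ring,
            show -(E * At) = E * (-At) by ring,
            mul_div_mul_left _ _ hEpos.ne']
        have hkeq : K ν = -At/(ν * Zt) + m/ν - Real.log Zt := by
          have hk : K ν = -(A ν)/(ν * Z ν) - Real.log (Z ν) := rfl
          rw [hk, hZfac, hAfac, Real.log_mul hEpos.ne' hZtpos.ne', hlogE, hc]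
          ring
        have hstep : -At/(ν * Zt) + m/ν = -Bt/(ν * Zt) := by
          rw [← hmZt]
          field_simp
          ring
        have hKbt : K ν = -Bt/(ν * Zt) - Real.log Zt := by rw [hkeq, hstep]
        rw [hKbt]
        have hZtle : Zt ≤ p₀ + Real.exp (-δ/ν) := by
          rw [hZtsplit]
          linarith
        have hp₀Zt : p₀ ≤ Zt := by
          rw [hZtsplit]
          linarith
        have hlog : Real.log Zt ≤ Real.log (p₀ + Real.exp (-δ/ν)) :=
          Real.log_le_log hZtpos hZtle
        have hdiv : Bt/(ν * Zt) ≤ (H * Real.exp (-δ/ν))/(ν * p₀) := by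
          apply div_le_div₀ (mul_nonneg hH.le (Real.exp_pos _).le) hBtle
            (mul_pos hν hp₀pos)
          exact mul_le_mul_of_nonneg_left hp₀Zt hν.le
        have h1 : -(H * Real.exp (-δ/ν))/(ν*p₀) = -((H * Real.exp (-δ/ν))/(ν*p₀)) :=
          neg_div _ _
        have h2 : -Bt/(ν * Zt) = -(Bt/(ν * Zt)) := neg_div _ _
        rw [h1, h2]
        linarith
      -- choose a small ν₀ with K ν₀ > ρ
      obtain ⟨ν₀, hν₀K, hν₀lt, hν₀pos⟩ : ∃ ν₀ : ℝ, ρ <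
          -(H * Real.exp (-δ/ν₀))/(ν₀*p₀) - Real.log (p₀ + Real.exp (-δ/ν₀)) ∧
          ν₀ < H/ρ ∧ 0 < ν₀ := by
        have h1 : Filter.Tendsto (fun ν : ℝ => δ/ν) (nhdsWithin 0 (Set.Ioi 0))
            Filter.atTop := by
          have h := Filter.Tendsto.const_mul_atTop hδpos
            (tendsto_inv_nhdsGT_zero (𝕜 := ℝ))
          simpa [div_eq_mul_inv] using h
        have h2 : Filter.Tendsto (fun ν : ℝ => Real.exp (-(δ/ν)))
            (nhdsWithin 0 (Set.Ioi 0)) (nhds 0) :=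
          Real.tendsto_exp_neg_atTop_nhds_zero.comp h1
        have h2' : Filter.Tendsto (fun ν : ℝ => Real.exp (-δ/ν))
            (nhdsWithin 0 (Set.Ioi 0)) (nhds 0) :=
          h2.congr (fun ν => by rw [neg_div])
        have h3 : Filter.Tendsto (fun ν : ℝ => (δ/ν) * Real.exp (-(δ/ν)))
            (nhdsWithin 0 (Set.Ioi 0)) (nhds 0) := by
          have h := (tendsto_pow_mul_exp_neg_atTop_nhds_zero 1).comp h1
          simpa [Function.comp_def] using h
        have h4 : Filter.Tendsto (fun ν : ℝ => Real.exp (-δ/ν)/ν)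
            (nhdsWithin 0 (Set.Ioi 0)) (nhds 0) := by
          have h5 := h3.const_mul (1/δ)
          rw [mul_zero] at h5
          apply h5.congr'
          filter_upwards [self_mem_nhdsWithin] with ν hν
          have hν' : (0:ℝ) < ν := hν
          rw [neg_div]
          field_simp
        have t1 : Filter.Tendsto (fun ν : ℝ => -(H * Real.exp (-δ/ν))/(ν*p₀))
            (nhdsWithin 0 (Set.Ioi 0)) (nhds 0) := by
          have h5 := h4.const_mul (-(H/p₀))
          rw [mul_zero] at h5
          apply h5.congr'
          filter_upwards [self_mem_nhdsWithin] with ν hν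
          have hν' : (0:ℝ) < ν := hν
          field_simp
        have t2 : Filter.Tendsto (fun ν : ℝ => Real.log (p₀ + Real.exp (-δ/ν)))
            (nhdsWithin 0 (Set.Ioi 0)) (nhds (Real.log p₀)) := by
          have hadd : Filter.Tendsto (fun ν : ℝ => p₀ + Real.exp (-δ/ν))
              (nhdsWithin 0 (Set.Ioi 0)) (nhds p₀) := by
            have := Filter.Tendsto.add (tendsto_const_nhds (x := p₀)
              (f := nhdsWithin (0:ℝ) (Set.Ioi 0))) h2'
            simpa using this
          exact ((Real.continuousAt_log hp₀pos.ne').tendsto.comp hadd)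
        have hG : Filter.Tendsto (fun ν : ℝ => -(H * Real.exp (-δ/ν))/(ν*p₀)
            - Real.log (p₀ + Real.exp (-δ/ν)))
            (nhdsWithin 0 (Set.Ioi 0)) (nhds (-Real.log p₀)) := by
          have := t1.sub t2
          simpa using this
        have hev1 : ∀ᶠ ν in nhdsWithin (0:ℝ) (Set.Ioi 0), ρ <
            -(H * Real.exp (-δ/ν))/(ν*p₀) - Real.log (p₀ + Real.exp (-δ/ν)) :=
          hG.eventually (eventually_gt_nhds hcase)
        have hev2 : ∀ᶠ ν in nhdsWithin (0:ℝ) (Set.Ioi 0), ν < H/ρ :=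
          Filter.Eventually.filter_mono nhdsWithin_le_nhds
            (eventually_lt_nhds hHρpos)
        have hev3 : ∀ᶠ ν in nhdsWithin (0:ℝ) (Set.Ioi 0), 0 < ν :=
          eventually_mem_nhdsWithin
        obtain ⟨ν₀, hA1, hA2, hA3⟩ := (hev1.and (hev2.and hev3)).exists
        exact ⟨ν₀, hA1, hA2, hA3⟩
      have hKν₀ : ρ ≤ K ν₀ := le_trans (hν₀K.le) (hKlow ν₀ hν₀pos)
      have hKend : K (H/ρ) ≤ ρ := by
        have h := hKup (H/ρ) hHρpos
        have e : H/(H/ρ) = ρ := by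
          rw [div_div_eq_mul_div, mul_comm, mul_div_assoc, div_self hH.ne', mul_one]
        rwa [e] at h
      -- IVT
      have hsub : Set.Icc ν₀ (H/ρ) ⊆ {ν : ℝ | 0 < ν} := fun x hx =>
        lt_of_lt_of_le hν₀pos hx.1
      obtain ⟨ν', hν'mem, hKν'⟩ : ∃ ν' ∈ Set.Icc ν₀ (H/ρ), K ν' = ρ := by
        have := intermediate_value_Icc' hν₀lt.le (hKcont.mono hsub)
        have hmem : ρ ∈ Set.Icc (K (H/ρ)) (K ν₀) := ⟨hKend, hKν₀⟩
        obtain ⟨ν', hν', hKν'⟩ := this hmem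
        exact ⟨ν', hν', hKν'⟩
      have hν'pos : 0 < ν' := lt_of_lt_of_le hν₀pos hν'mem.1
      have hν'ne : ν' ≠ 0 := hν'pos.ne'
      -- the tilted distribution
      refine ⟨ν', ⟨hν'pos.le, hν'mem.2⟩,
        fun s => P s * Real.exp (-(V s)/ν') / Z ν', ?_, ?_, ?_, ?_⟩
      · intro s
        exact div_nonneg (mul_nonneg (hP s).le (Real.exp_pos _).le) (hZpos ν').le
      · rw [← Finset.sum_div]
        have hz : (∑ s, P s * Real.exp (-(V s)/ν')) = Z ν' := rfl
        rw [hz]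
        exact div_self (hZpos ν').ne'
      · have hterm : ∀ s, (P s * Real.exp (-(V s)/ν') / Z ν') *
            Real.log ((P s * Real.exp (-(V s)/ν') / Z ν') / P s)
            = -(P s * V s * Real.exp (-(V s)/ν')) / (ν' * Z ν')
              - (P s * Real.exp (-(V s)/ν') / Z ν') * Real.log (Z ν') := by
          intro s
          have e1 : (P s * Real.exp (-(V s)/ν') / Z ν') / P s
              = Real.exp (-(V s)/ν') / Z ν' := by
            rw [div_div, mul_comm (Z ν') (P s), mul_div_mul_left _ _ (hP s).ne']
          rw [e1, Real.log_div (Real.exp_ne_zero _) (hZpos ν').ne', Real.log_exp]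
          have hZne' : Z ν' ≠ 0 := (hZpos ν').ne'
          set E := Real.exp (-(V s)/ν') with hEdef
          field_simp
        rw [Finset.sum_congr rfl (fun s _ => hterm s), Finset.sum_sub_distrib]
        have e2 : ∑ s, -(P s * V s * Real.exp (-(V s)/ν')) / (ν' * Z ν')
            = -(A ν')/(ν' * Z ν') := by
          rw [← Finset.sum_div]
          congr 1
          rw [Finset.sum_neg_distrib]
        have e3 : ∑ s, (P s * Real.exp (-(V s)/ν') / Z ν') * Real.log (Z ν')
            = Real.log (Z ν') := by
          rw [← Finset.sum_mul, ← Finset.sum_div]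
          have hz : (∑ s, P s * Real.exp (-(V s)/ν')) = Z ν' := rfl
          rw [hz, div_self (hZpos ν').ne', one_mul]
        rw [e2, e3]
        exact le_of_eq hKν'
      · -- expectation equals the dual value
        have e4 : ∑ s, (P s * Real.exp (-(V s)/ν') / Z ν') * V s
            = A ν' / Z ν' := by
          have h0 : ∀ s, (P s * Real.exp (-(V s)/ν') / Z ν') * V s
              = (P s * V s * Real.exp (-(V s)/ν')) / Z ν' := fun s => by ring
          rw [Finset.sum_congr rfl fun s _ => h0 s, ← Finset.sum_div]
        rw [e4, hf_def]
        simp only [hν'ne, if_false]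
        have hz : (∑ s, P s * Real.exp (-(V s)/ν')) = Z ν' := rfl
        rw [hz]
        have hKeq : -(A ν')/(ν' * Z ν') - Real.log (Z ν') = ρ := hKν'
        have hZne : Z ν' ≠ 0 := (hZpos ν').ne'
        have h6 : (A ν')/(ν' * Z ν') = -(ρ + Real.log (Z ν')) := by
          rw [neg_div] at hKeq
          linarith
        rw [div_eq_iff hZne]
        rw [div_eq_iff (mul_ne_zero hν'ne hZne)] at h6
        rw [h6]
        ring
  obtain ⟨ν, hν, Q, hQ0, hQ1, hKL, hEq⟩ := strong
  have hyR : f ν ∈ {y : ℝ | ∃ ν ∈ Set.Icc (0:ℝ) (H / ρ), y = f ν} := ⟨ν, hν, rfl⟩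
  have hxL : ∑ s, Q s * V s ∈ {x : ℝ | ∃ Q : S → ℝ, (∀ s, 0 ≤ Q s) ∧ (∑ s, Q s = 1) ∧
      (∑ s, Q s * Real.log (Q s / P s)) ≤ ρ ∧ x = ∑ s, Q s * V s} := ⟨Q, hQ0, hQ1, hKL, rfl⟩
  have h1 : sInf {x : ℝ | ∃ Q : S → ℝ, (∀ s, 0 ≤ Q s) ∧ (∑ s, Q s = 1) ∧
      (∑ s, Q s * Real.log (Q s / P s)) ≤ ρ ∧ x = ∑ s, Q s * V s} = -(f ν) := by
    apply le_antisymm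
    · rw [← hEq]
      exact csInf_le ⟨-(f ν), by
        rintro x ⟨Q', hQ0', hQ1', hKL', rfl⟩
        exact weak Q' hQ0' hQ1' hKL' ν hν⟩ hxL
    · apply le_csInf ⟨_, hxL⟩
      rintro x ⟨Q', hQ0', hQ1', hKL', rfl⟩
      exact weak Q' hQ0' hQ1' hKL' ν hν
  have h2 : sInf {y : ℝ | ∃ ν ∈ Set.Icc (0:ℝ) (H / ρ), y = f ν} = f ν := by
    apply le_antisymm
    · exact csInf_le ⟨f ν, by
        rintro y ⟨ν', hν', rfl⟩
        have := weak Q hQ0 hQ1 hKL ν' hν'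
        linarith [hEq]⟩ hyR
    · apply le_csInf ⟨_, hyR⟩
      rintro y ⟨ν', hν', rfl⟩
      have := weak Q hQ0 hQ1 hKL ν' hν'
      linarith [hEq]
  rw [h1, h2]
end

section
/- Let S be a finite set, P° a probability distribution on S, V : S → [0, H] bounded, and ρ > 0. Then inf over probability distributions P ≪ P° with χ²(P‖P°) ≤ ρ of E_P[V] equals sup over vectors λ ∈ [0,H]^S of ( E_{P°}[V − λ] − √(ρ·Var_{P°}(V − λ)) ), i.e. inf_{χ²(P‖P°)≤ρ} E_P[V] = sup_{λ∈[0,H]^S} ( E_{P°}[V − λ] − √(ρ·Var_{P°}(V − λ)) ). -/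
open Finset Real

section ChiSqDualAux

variable {S : Type*} [Fintype S]

private lemma var_expand (P : S → ℝ) (hP1 : ∑ s, P s = 1) (g : S → ℝ) :
    ∑ s, P s * (g s - ∑ t, P t * g t) ^ 2
      = ∑ s, P s * g s ^ 2 - (∑ s, P s * g s) ^ 2 := by
  set m := ∑ t, P t * g t with hm
  have h : ∀ s ∈ Finset.univ, P s * (g s - m) ^ 2
      = (P s * g s ^ 2 - (2 * m) * (P s * g s)) + m ^ 2 * P s := fun s _ => by ring
  rw [Finset.sum_congr rfl h, Finset.sum_add_distrib, Finset.sum_sub_distrib,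
    ← Finset.mul_sum, ← Finset.mul_sum, hP1, ← hm]
  ring

private lemma weak_dual (P Q V lam : S → ℝ) (ρ : ℝ) (hρ : 0 ≤ ρ)
    (hP : ∀ s, 0 ≤ P s) (hP1 : ∑ s, P s = 1)
    (hQ : ∀ s, 0 ≤ Q s) (hQ1 : ∑ s, Q s = 1)
    (habs : ∀ s, P s = 0 → Q s = 0)
    (hchi : ∑ s, P s * (Q s / P s - 1) ^ 2 ≤ ρ)
    (hlam : ∀ s, 0 ≤ lam s) :
    (∑ s, P s * (V s - lam s))
      - Real.sqrt (ρ * ((∑ s, P s * (V s - lam s) ^ 2) - (∑ s, P s * (V s - lam s)) ^ 2))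
      ≤ ∑ s, Q s * V s := by
  set f : S → ℝ := fun s => V s - lam s with hf
  set m : ℝ := ∑ s, P s * f s with hm
  set u : S → ℝ := fun s => Real.sqrt (P s) * (Q s / P s - 1) with hu
  set v : S → ℝ := fun s => Real.sqrt (P s) * (f s - m) with hv
  set A : ℝ := ∑ s, (Q s - P s) * (f s - m) with hA
  have hVar : (0:ℝ) ≤ (∑ s, P s * f s ^ 2) - (∑ s, P s * f s) ^ 2 := by
    rw [← hm, ← var_expand P hP1 f, ← hm]
    exact Finset.sum_nonneg fun s _ => mul_nonneg (hP s) (sq_nonneg _)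
  have hpoint : ∀ s ∈ Finset.univ, (Q s - P s) * (f s - m) = u s * v s := by
    intro s _
    by_cases h : P s = 0
    · simp [hu, hv, h, habs s h]
    · have h1 : u s * v s = (Real.sqrt (P s) * Real.sqrt (P s)) * ((Q s / P s - 1) * (f s - m)) := by
        rw [hu, hv]; ring
      rw [h1, Real.mul_self_sqrt (hP s)]
      have h2 : P s * (Q s / P s - 1) = Q s - P s := by field_simp
      calc (Q s - P s) * (f s - m) = (P s * (Q s / P s - 1)) * (f s - m) := by rw [h2]
        _ = P s * ((Q s / P s - 1) * (f s - m)) := by ring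
  have hu2 : ∀ s ∈ Finset.univ, u s ^ 2 = P s * (Q s / P s - 1) ^ 2 := by
    intro s _; rw [hu, mul_pow, Real.sq_sqrt (hP s)]
  have hv2 : ∀ s ∈ Finset.univ, v s ^ 2 = P s * (f s - m) ^ 2 := by
    intro s _; rw [hv, mul_pow, Real.sq_sqrt (hP s)]
  have hcs := Finset.sum_mul_sq_le_sq_mul_sq Finset.univ u v
  have hA2 : A ^ 2 ≤ ρ * ((∑ s, P s * f s ^ 2) - m ^ 2) := by
    have h1 : A = ∑ s, u s * v s := Finset.sum_congr rfl hpoint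
    have h2 : ∑ s, u s ^ 2 ≤ ρ := by rw [Finset.sum_congr rfl hu2]; exact hchi
    have h3 : ∑ s, v s ^ 2 = (∑ s, P s * f s ^ 2) - m ^ 2 := by
      rw [Finset.sum_congr rfl hv2, hm, var_expand P hP1 f]
    have h4 : (0:ℝ) ≤ ∑ s, v s ^ 2 := Finset.sum_nonneg fun s _ => sq_nonneg _
    calc A ^ 2 = (∑ s, u s * v s) ^ 2 := by rw [h1]
      _ ≤ (∑ s, u s ^ 2) * (∑ s, v s ^ 2) := hcs
      _ ≤ ρ * (∑ s, v s ^ 2) := mul_le_mul_of_nonneg_right h2 h4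
      _ = ρ * ((∑ s, P s * f s ^ 2) - m ^ 2) := by rw [h3]
  have hAlb : -Real.sqrt (ρ * ((∑ s, P s * f s ^ 2) - m ^ 2)) ≤ A := by
    have h1 : |A| ≤ Real.sqrt (ρ * ((∑ s, P s * f s ^ 2) - m ^ 2)) := by
      rw [← Real.sqrt_sq_eq_abs]; exact Real.sqrt_le_sqrt hA2
    linarith [neg_abs_le A]
  have hAeq : A = (∑ s, Q s * f s) - m := by
    have h : ∀ s ∈ Finset.univ, (Q s - P s) * (f s - m)
        = (Q s * f s - P s * f s - m * Q s) + m * P s := fun s _ => by ring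
    rw [hA, Finset.sum_congr rfl h, Finset.sum_add_distrib, Finset.sum_sub_distrib,
      Finset.sum_sub_distrib, ← Finset.mul_sum, ← Finset.mul_sum, hQ1, hP1, ← hm]
    ring
  have hQfV : ∑ s, Q s * f s ≤ ∑ s, Q s * V s := by
    apply Finset.sum_le_sum
    intro s _
    have : f s ≤ V s := by rw [hf]; simp; exact hlam s
    exact mul_le_mul_of_nonneg_left this (hQ s)
  have : m - Real.sqrt (ρ * ((∑ s, P s * f s ^ 2) - m ^ 2)) ≤ ∑ s, Q s * f s := by
    linarith [hAlb, hAeq.symm.le]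
  have hr : (∑ s, P s * (V s - lam s) ^ 2) = ∑ s, P s * f s ^ 2 := rfl
  rw [hr]
  linarith

private lemma construct_nondeg (P V : S → ℝ) (H ρ θ : ℝ) (hρ : 0 < ρ)
    (hP : ∀ s, 0 ≤ P s) (hP1 : ∑ s, P s = 1)
    (hV : ∀ s, V s ∈ Set.Icc (0:ℝ) H) (hθ0 : 0 ≤ θ) (hθH : θ ≤ H)
    (hVar : 0 < (∑ s, P s * (min (V s) θ) ^ 2) - (∑ s, P s * min (V s) θ) ^ 2)
    (hub : θ ≤ (∑ s, P s * min (V s) θ)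
        + Real.sqrt (((∑ s, P s * (min (V s) θ) ^ 2) - (∑ s, P s * min (V s) θ) ^ 2) / ρ))
    (hcs : θ = (∑ s, P s * min (V s) θ)
        + Real.sqrt (((∑ s, P s * (min (V s) θ) ^ 2) - (∑ s, P s * min (V s) θ) ^ 2) / ρ)
      ∨ θ = H) :
    ∃ Q lam : S → ℝ, (∀ s, 0 ≤ Q s) ∧ (∑ s, Q s = 1) ∧ (∀ s, P s = 0 → Q s = 0) ∧
      (∑ s, P s * (Q s / P s - 1) ^ 2) ≤ ρ ∧ (∀ s, lam s ∈ Set.Icc (0:ℝ) H) ∧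
      (∑ s, Q s * V s) = (∑ s, P s * (V s - lam s))
          - Real.sqrt (ρ * ((∑ s, P s * (V s - lam s) ^ 2) - (∑ s, P s * (V s - lam s)) ^ 2)) := by
  set f : S → ℝ := fun s => min (V s) θ with hfdef
  set μ : ℝ := ∑ s, P s * f s with hμ
  set W : ℝ := (∑ s, P s * f s ^ 2) - μ ^ 2 with hW
  set c : ℝ := Real.sqrt (ρ / W) with hc
  have hWpos : 0 < W := hVar
  have hc1 : c * Real.sqrt (W / ρ) = 1 := by
    rw [hc, ← Real.sqrt_mul (div_nonneg hρ.le hWpos.le)]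
    have : ρ / W * (W / ρ) = 1 := by field_simp
    rw [this, Real.sqrt_one]
  have hcpos : 0 < c := Real.sqrt_pos.mpr (div_pos hρ hWpos)
  have hc2 : c ^ 2 = ρ / W := Real.sq_sqrt (div_nonneg hρ.le hWpos.le)
  have hcW : c * W = Real.sqrt (ρ * W) := by
    have h1 : ρ * W = (ρ / W) * W ^ 2 := by field_simp
    rw [h1, Real.sqrt_mul (div_nonneg hρ.le hWpos.le), Real.sqrt_sq hWpos.le, hc]
  set Q : S → ℝ := fun s => P s * (1 - c * (f s - μ)) with hQdef
  set lam : S → ℝ := fun s => V s - f s with hlamdef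
  have hfle : ∀ s, f s ≤ μ + Real.sqrt (W / ρ) := fun s => le_trans (min_le_right _ _) hub
  have hfactor : ∀ s, 0 ≤ 1 - c * (f s - μ) := by
    intro s
    have h1 : c * (f s - μ) ≤ c * Real.sqrt (W / ρ) :=
      mul_le_mul_of_nonneg_left (by linarith [hfle s]) hcpos.le
    rw [hc1] at h1; linarith
  have hQ0 : ∀ s, 0 ≤ Q s := fun s => mul_nonneg (hP s) (hfactor s)
  have hQ1 : ∑ s, Q s = 1 := by
    have h : ∀ s ∈ Finset.univ, Q s = (P s - c * (P s * f s)) + (c * μ) * P s := fun s _ => by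
      rw [hQdef]; ring
    rw [Finset.sum_congr rfl h, Finset.sum_add_distrib, Finset.sum_sub_distrib,
      ← Finset.mul_sum, ← Finset.mul_sum, hP1, ← hμ]
    ring
  have habs : ∀ s, P s = 0 → Q s = 0 := fun s h => by rw [hQdef]; simp [h]
  have hchi : ∑ s, P s * (Q s / P s - 1) ^ 2 ≤ ρ := by
    have h : ∀ s ∈ Finset.univ, P s * (Q s / P s - 1) ^ 2 = c ^ 2 * (P s * (f s - μ) ^ 2) := by
      intro s _
      by_cases hs : P s = 0
      · rw [hQdef]; simp [hs]
      · have hQP : Q s / P s = 1 - c * (f s - μ) := by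
          show P s * (1 - c * (f s - μ)) / P s = _
          exact mul_div_cancel_left₀ _ hs
        rw [hQP]; ring
    rw [Finset.sum_congr rfl h, ← Finset.mul_sum]
    have h2 : ∑ s, P s * (f s - μ) ^ 2 = W := by
      rw [hW, hμ]; exact var_expand P hP1 f
    rw [h2, hc2]
    rw [div_mul_cancel₀ _ (ne_of_gt hWpos)]
  have hlamIcc : ∀ s, lam s ∈ Set.Icc (0:ℝ) H := by
    intro s
    constructor
    · rw [hlamdef]; simp only [sub_nonneg]; exact min_le_left _ _
    · have h1 : 0 ≤ f s := le_min (hV s).1 hθ0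
      have h2 : lam s = V s - f s := rfl
      have := (hV s).2
      rw [h2]; linarith
  have hVlam : ∀ s, V s - lam s = f s := fun s => by rw [hlamdef]; ring
  have hQV : ∀ s ∈ Finset.univ, Q s * V s = Q s * f s := by
    intro s _
    by_cases hs : V s ≤ θ
    · rw [hfdef]; simp only [min_eq_left hs]
    · push_neg at hs
      rcases hcs with heq | hH'
      · have hfθ : f s = θ := min_eq_right hs.le
        have : Q s = 0 := by
          show P s * (1 - c * (f s - μ)) = 0
          rw [hfθ]
          have h1 : θ - μ = Real.sqrt (W / ρ) := by linarith [heq]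
          rw [h1, hc1]; ring
        rw [this]; ring
      · exact absurd ((hV s).2) (by rw [← hH']; exact not_le.mpr hs)
  have hvalue : ∑ s, Q s * V s = μ - Real.sqrt (ρ * W) := by
    rw [Finset.sum_congr rfl hQV]
    have h : ∀ s ∈ Finset.univ, Q s * f s
        = (P s * f s - c * (P s * f s ^ 2)) + (c * μ) * (P s * f s) := fun s _ => by
      rw [hQdef]; ring
    rw [Finset.sum_congr rfl h, Finset.sum_add_distrib, Finset.sum_sub_distrib,
      ← Finset.mul_sum, ← Finset.mul_sum, ← hμ, ← hcW, hW]
    ring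
  refine ⟨Q, lam, hQ0, hQ1, habs, hchi, hlamIcc, ?_⟩
  have e1 : ∑ s, P s * (V s - lam s) = μ := by
    rw [hμ]; exact Finset.sum_congr rfl fun s _ => by rw [hVlam s]
  have e2 : ∑ s, P s * (V s - lam s) ^ 2 = ∑ s, P s * f s ^ 2 :=
    Finset.sum_congr rfl fun s _ => by rw [hVlam s]
  rw [e1, e2, hvalue, hW]

private lemma construct_deg (P V : S → ℝ) (H ρ θ : ℝ) (hρ : 0 < ρ)
    (hP : ∀ s, 0 ≤ P s) (hP1 : ∑ s, P s = 1)
    (hV : ∀ s, V s ∈ Set.Icc (0:ℝ) H) (hθ0 : 0 ≤ θ)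
    (hμ : ∑ s, P s * min (V s) θ = θ)
    (hVar0 : ∑ s, P s * (min (V s) θ) ^ 2 - θ ^ 2 = 0)
    (hp1 : (∑ s, if θ < V s then P s else 0) < 1)
    (hp2 : (∑ s, if θ < V s then P s else 0) ≤ ρ * (1 - ∑ s, if θ < V s then P s else 0)) :
    ∃ Q lam : S → ℝ, (∀ s, 0 ≤ Q s) ∧ (∑ s, Q s = 1) ∧ (∀ s, P s = 0 → Q s = 0) ∧
      (∑ s, P s * (Q s / P s - 1) ^ 2) ≤ ρ ∧ (∀ s, lam s ∈ Set.Icc (0:ℝ) H) ∧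
      (∑ s, Q s * V s) = (∑ s, P s * (V s - lam s))
          - Real.sqrt (ρ * ((∑ s, P s * (V s - lam s) ^ 2) - (∑ s, P s * (V s - lam s)) ^ 2)) := by
  set f : S → ℝ := fun s => min (V s) θ with hfdef
  set p : ℝ := ∑ s, if θ < V s then P s else 0 with hp
  have hq : (0:ℝ) < 1 - p := by linarith
  have hq' : ∑ s, (if θ < V s then (0:ℝ) else P s) = 1 - p := by
    have h : ∀ s ∈ Finset.univ, (if θ < V s then (0:ℝ) else P s)
        = P s - (if θ < V s then P s else 0) := by
      intro s _; by_cases hc : θ < V s <;> simp [hc]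
    rw [Finset.sum_congr rfl h, Finset.sum_sub_distrib, hP1, ← hp]
  have hsupp : ∀ s, P s ≠ 0 → θ ≤ V s := by
    intro s hs
    have h0 : ∑ s, P s * (f s - θ) ^ 2 = 0 := by
      have h := var_expand P hP1 f
      rw [hμ] at h
      exact h.trans hVar0
    have h1 := (Finset.sum_eq_zero_iff_of_nonneg
      (fun s _ => mul_nonneg (hP s) (sq_nonneg (f s - θ)))).mp h0 s (Finset.mem_univ s)
    have h2 : (f s - θ) ^ 2 = 0 := by
      rcases mul_eq_zero.mp h1 with h | h
      · exact absurd h hs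
      · exact h
    have h3 : f s = θ := by nlinarith [h2]
    exact min_eq_right_iff.mp h3
  set Q : S → ℝ := fun s => if θ < V s then 0 else P s / (1 - p) with hQdef
  set lam : S → ℝ := fun s => V s - f s with hlamdef
  have hQ0 : ∀ s, 0 ≤ Q s := by
    intro s
    show (0:ℝ) ≤ if θ < V s then 0 else P s / (1 - p)
    by_cases hc : θ < V s
    · simp [hc]
    · simp only [hc, if_false]
      exact div_nonneg (hP s) hq.le
  have habs : ∀ s, P s = 0 → Q s = 0 := by
    intro s h
    show (if θ < V s then 0 else P s / (1 - p)) = 0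
    by_cases hc : θ < V s <;> simp [hc, h]
  have hQ1 : ∑ s, Q s = 1 := by
    have h : ∀ s ∈ Finset.univ, Q s = (if θ < V s then (0:ℝ) else P s) / (1 - p) := by
      intro s _
      show (if θ < V s then (0:ℝ) else P s / (1 - p)) = _
      by_cases hc : θ < V s <;> simp [hc]
    rw [Finset.sum_congr rfl h, ← Finset.sum_div, hq', div_self (ne_of_gt hq)]
  have hchi : ∑ s, P s * (Q s / P s - 1) ^ 2 ≤ ρ := by
    have h : ∀ s ∈ Finset.univ, P s * (Q s / P s - 1) ^ 2
        = (if θ < V s then P s else 0) + (p / (1 - p)) ^ 2 * (if θ < V s then (0:ℝ) else P s) := by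
      intro s _
      by_cases hPs : P s = 0
      · by_cases hc : θ < V s <;> simp [hc, hPs]
      · by_cases hc : θ < V s
        · have hQs : Q s = 0 := by show (if θ < V s then (0:ℝ) else P s / (1 - p)) = 0; simp [hc]
          rw [hQs]
          simp [hc]
        · have hQs : Q s / P s = 1 / (1 - p) := by
            show (if θ < V s then (0:ℝ) else P s / (1 - p)) / P s = _
            simp only [hc, if_false]
            rw [div_right_comm, div_self hPs]
          rw [hQs]
          have h2 : 1 / (1 - p) - 1 = p / (1 - p) := by field_simp; ring
          rw [h2]
          simp only [hc, if_false]
          ring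
    rw [Finset.sum_congr rfl h, Finset.sum_add_distrib, ← Finset.mul_sum, ← hp, hq']
    have key : p + (p / (1 - p)) ^ 2 * (1 - p) = p / (1 - p) := by field_simp; ring
    rw [key]
    exact (div_le_iff₀ hq).mpr (by linarith [hp2])
  have hlamIcc : ∀ s, lam s ∈ Set.Icc (0:ℝ) H := by
    intro s
    constructor
    · show 0 ≤ V s - f s
      simp only [sub_nonneg]; exact min_le_left _ _
    · show V s - f s ≤ H
      have h1 : 0 ≤ f s := le_min (hV s).1 hθ0
      have := (hV s).2
      linarith
  have hvalue : ∑ s, Q s * V s = θ := by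
    have h : ∀ s ∈ Finset.univ, Q s * V s
        = (θ / (1 - p)) * (if θ < V s then (0:ℝ) else P s) := by
      intro s _
      by_cases hc : θ < V s
      · have hQs : Q s = 0 := by show (if θ < V s then (0:ℝ) else P s / (1 - p)) = 0; simp [hc]
        rw [hQs]; simp [hc]
      · by_cases hPs : P s = 0
        · have hQs : Q s = 0 := habs s hPs
          rw [hQs, if_neg hc, hPs]; ring
        · have hVs : V s = θ := le_antisymm (not_lt.mp hc) (hsupp s hPs)
          have hQs : Q s = P s / (1 - p) := by
            show (if θ < V s then (0:ℝ) else P s / (1 - p)) = _; simp [hc]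
          rw [hQs, if_neg hc, hVs]
          ring
    rw [Finset.sum_congr rfl h, ← Finset.mul_sum, hq', div_mul_cancel₀ _ (ne_of_gt hq)]
  refine ⟨Q, lam, hQ0, hQ1, habs, hchi, hlamIcc, ?_⟩
  have hVlam : ∀ s, V s - lam s = f s := fun s => by show V s - (V s - f s) = f s; ring
  have e1 : ∑ s, P s * (V s - lam s) = θ := by
    rw [← hμ]; exact Finset.sum_congr rfl fun s _ => by rw [hVlam s]
  have e2 : ∑ s, P s * (V s - lam s) ^ 2 = ∑ s, P s * f s ^ 2 :=
    Finset.sum_congr rfl fun s _ => by rw [hVlam s]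
  rw [e1, e2, hvalue]
  have e3 : (∑ s, P s * f s ^ 2) - θ ^ 2 = 0 := hVar0
  rw [e3, mul_zero, Real.sqrt_zero, sub_zero]

private lemma exists_pair (P V : S → ℝ) (H ρ : ℝ) (hρ : 0 < ρ) (hH : 0 < H)
    (hP : ∀ s, 0 ≤ P s) (hP1 : ∑ s, P s = 1)
    (hV : ∀ s, V s ∈ Set.Icc (0:ℝ) H) :
    ∃ Q lam : S → ℝ, (∀ s, 0 ≤ Q s) ∧ (∑ s, Q s = 1) ∧ (∀ s, P s = 0 → Q s = 0) ∧
      (∑ s, P s * (Q s / P s - 1) ^ 2) ≤ ρ ∧ (∀ s, lam s ∈ Set.Icc (0:ℝ) H) ∧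
      (∑ s, Q s * V s) = (∑ s, P s * (V s - lam s))
          - Real.sqrt (ρ * ((∑ s, P s * (V s - lam s) ^ 2) - (∑ s, P s * (V s - lam s)) ^ 2)) := by
  classical
  set μf : ℝ → ℝ := fun t => ∑ s, P s * min (V s) t with hμf
  set Vf : ℝ → ℝ := fun t => (∑ s, P s * (min (V s) t) ^ 2) - (μf t) ^ 2 with hVf
  set G : ℝ → ℝ := fun t => μf t + Real.sqrt (Vf t / ρ) with hG
  have hμcont : Continuous μf :=
    continuous_finset_sum _ fun s _ => continuous_const.mul (continuous_const.min continuous_id)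
  have hVcont : Continuous Vf :=
    ((continuous_finset_sum _ fun s _ =>
      continuous_const.mul ((continuous_const.min continuous_id).pow 2))).sub (hμcont.pow 2)
  have hGcont : Continuous G := hμcont.add (Real.continuous_sqrt.comp (hVcont.div_const ρ))
  have hVnn : ∀ t, 0 ≤ Vf t := by
    intro t
    have := var_expand P hP1 (fun s => min (V s) t)
    show 0 ≤ (∑ s, P s * (min (V s) t) ^ 2) - (∑ s, P s * min (V s) t) ^ 2
    rw [← this]
    exact Finset.sum_nonneg fun s _ => mul_nonneg (hP s) (sq_nonneg _)
  set K : Set ℝ := {t | t ∈ Set.Icc 0 H ∧ t ≤ G t} with hK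
  have h0K : (0:ℝ) ∈ K := by
    constructor
    · exact ⟨le_refl 0, hH.le⟩
    · show (0:ℝ) ≤ μf 0 + Real.sqrt (Vf 0 / ρ)
      have h1 : 0 ≤ μf 0 :=
        Finset.sum_nonneg fun s _ => mul_nonneg (hP s) (le_min (hV s).1 (le_refl 0))
      have h2 := Real.sqrt_nonneg (Vf 0 / ρ)
      linarith
  have hKbdd : BddAbove K := ⟨H, fun t ht => ht.1.2⟩
  set θ : ℝ := sSup K with hθ
  have hθ0 : 0 ≤ θ := le_csSup hKbdd h0K
  have hθH : θ ≤ H := csSup_le ⟨0, h0K⟩ fun t ht => ht.1.2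
  have hθG : θ ≤ G θ := by
    have h1 : sSup K ∈ closure K := csSup_mem_closure ⟨0, h0K⟩ hKbdd
    have h2 : closure K ⊆ {t : ℝ | t ≤ G t} :=
      closure_minimal (fun t ht => ht.2) (isClosed_le continuous_id hGcont)
    exact h2 h1
  have hright : ∀ t, θ < t → t ≤ H → G t < t := by
    intro t h1 h2
    by_contra hcon
    push_neg at hcon
    have : t ∈ K := ⟨⟨le_trans hθ0 h1.le, h2⟩, hcon⟩
    exact absurd (le_csSup hKbdd this) (not_le.mpr h1)
  rcases lt_or_eq_of_le (hVnn θ) with hVar | hVar0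
  · -- nondegenerate
    rcases eq_or_lt_of_le hθH with hH' | hH'
    · exact construct_nondeg P V H ρ θ hρ hP hP1 hV hθ0 hθH hVar hθG (Or.inr hH')
    · have hGle : G θ ≤ θ := by
        have hev : ∀ᶠ t in nhdsWithin θ (Set.Ioi θ), G t ≤ t := by
          filter_upwards [Ioc_mem_nhdsGT_of_mem ⟨le_refl θ, hH'⟩] with t ht
          exact (hright t ht.1 ht.2).le
        have tendG : Filter.Tendsto G (nhdsWithin θ (Set.Ioi θ)) (nhds (G θ)) :=
          hGcont.continuousAt.tendsto.mono_left nhdsWithin_le_nhds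
        have tendid : Filter.Tendsto (fun t : ℝ => t) (nhdsWithin θ (Set.Ioi θ)) (nhds θ) :=
          Filter.tendsto_id.mono_left nhdsWithin_le_nhds
        exact le_of_tendsto_of_tendsto tendG tendid hev
      refine construct_nondeg P V H ρ θ hρ hP hP1 hV hθ0 hθH hVar hθG (Or.inl ?_)
      exact le_antisymm hθG hGle
  · -- degenerate: Vf θ = 0
    have hVar0' : Vf θ = 0 := hVar0.symm
    have hμθ : μf θ = θ := by
      have h1 : θ ≤ μf θ := by
        have : Real.sqrt (Vf θ / ρ) = 0 := by rw [hVar0', zero_div, Real.sqrt_zero]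
        have h2 : G θ = μf θ + Real.sqrt (Vf θ / ρ) := rfl
        rw [h2, this, add_zero] at hθG
        exact hθG
      have h2 : μf θ ≤ θ := by
        have : ∀ s ∈ Finset.univ, P s * min (V s) θ ≤ P s * θ := fun s _ =>
          mul_le_mul_of_nonneg_left (min_le_right _ _) (hP s)
        calc μf θ ≤ ∑ s, P s * θ := Finset.sum_le_sum this
          _ = θ := by rw [← Finset.sum_mul, hP1, one_mul]
      exact le_antisymm h2 h1
    set p : ℝ := ∑ s, if θ < V s then P s else 0 with hp
    have hp0 : 0 ≤ p :=
      Finset.sum_nonneg fun s _ => by by_cases hc : θ < V s <;> simp [hc, hP s]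
    have hVarform : ∑ s, P s * (min (V s) θ) ^ 2 - θ ^ 2 = 0 := by
      have : Vf θ = (∑ s, P s * (min (V s) θ) ^ 2) - (μf θ) ^ 2 := rfl
      rw [this, hμθ] at hVar0'
      exact hVar0'
    have hsupp : ∀ s, P s ≠ 0 → θ ≤ V s := by
      intro s hs
      have h0 : ∑ s, P s * (min (V s) θ - θ) ^ 2 = 0 := by
        have h := var_expand P hP1 (fun s => min (V s) θ)
        have hμθ' : ∑ s, P s * min (V s) θ = θ := hμθ
        rw [hμθ'] at h
        exact h.trans hVarform
      have h1 := (Finset.sum_eq_zero_iff_of_nonneg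
        (fun s _ => mul_nonneg (hP s) (sq_nonneg _))).mp h0 s (Finset.mem_univ s)
      have h2 : (min (V s) θ - θ) ^ 2 = 0 := by
        rcases mul_eq_zero.mp h1 with h | h
        · exact absurd h hs
        · exact h
      have h3 : min (V s) θ = θ := by nlinarith [h2]
      exact min_eq_right_iff.mp h3
    by_cases hpz : p = 0
    · refine construct_deg P V H ρ θ hρ hP hP1 hV hθ0 hμθ hVarform ?_ ?_
      · rw [← hp, hpz]; norm_num
      · rw [← hp, hpz]; simp [hρ.le]
    · -- p ≠ 0 : extract a witness, get θ < H, run the ε-argument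
      obtain ⟨s₀, -, hs₀⟩ := Finset.exists_ne_zero_of_sum_ne_zero (hp ▸ hpz)
      have hs₀' : θ < V s₀ ∧ P s₀ ≠ 0 := by
        by_cases hc : θ < V s₀
        · refine ⟨hc, ?_⟩; intro h; rw [if_pos hc, h] at hs₀; exact hs₀ rfl
        · rw [if_neg hc] at hs₀; exact absurd rfl hs₀
      have hθH' : θ < H := lt_of_lt_of_le hs₀'.1 (hV s₀).2
      -- δ : minimal gap
      set T : Finset S := Finset.univ.filter (fun s => θ < V s) with hT
      have hTne : T.Nonempty := ⟨s₀, Finset.mem_filter.mpr ⟨Finset.mem_univ _, hs₀'.1⟩⟩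
      set δ : ℝ := T.inf' hTne (fun s => V s - θ) with hδ
      have hδpos : 0 < δ := by
        rw [hδ, Finset.lt_inf'_iff]
        intro s hs
        have := (Finset.mem_filter.mp hs).2
        linarith
      set ε : ℝ := min δ (H - θ) with hε
      have hεpos : 0 < ε := lt_min hδpos (by linarith)
      have hεδ : ε ≤ δ := min_le_left _ _
      have ht1 : θ < θ + ε := by linarith
      have ht2 : θ + ε ≤ H := by
        have := min_le_right δ (H - θ); rw [← hε] at this; linarith
      have hGt := hright (θ + ε) ht1 ht2
      set χ : S → ℝ := fun s => if θ < V s then 1 else 0 with hχ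
      have hmin : ∀ s, P s ≠ 0 → min (V s) (θ + ε) = θ + ε * χ s := by
        intro s hs
        by_cases hc : θ < V s
        · have hsT : s ∈ T := Finset.mem_filter.mpr ⟨Finset.mem_univ s, hc⟩
          have h1 : δ ≤ V s - θ := Finset.inf'_le (fun s => V s - θ) hsT
          have h2 : θ + ε ≤ V s := by linarith
          rw [min_eq_right h2, hχ]; simp [hc]
        · have hVs : V s = θ := le_antisymm (not_lt.mp hc) (hsupp s hs)
          rw [hχ]
          simp only [hc, if_false, mul_zero, add_zero]
          rw [hVs, min_eq_left (by linarith)]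
      have hPχ : ∑ s, P s * χ s = p := by
        rw [hp]
        refine Finset.sum_congr rfl fun s _ => ?_
        rw [hχ]; by_cases hc : θ < V s <;> simp [hc]
      have hμt : μf (θ + ε) = θ + ε * p := by
        have h1 : ∀ s ∈ Finset.univ, P s * min (V s) (θ + ε)
            = θ * P s + ε * (P s * χ s) := by
          intro s _
          by_cases hs : P s = 0
          · rw [hs]; ring
          · rw [hmin s hs]; ring
        show (∑ s, P s * min (V s) (θ + ε)) = θ + ε * p
        rw [Finset.sum_congr rfl h1, Finset.sum_add_distrib, ← Finset.mul_sum,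
          ← Finset.mul_sum, hP1, hPχ]
        ring
      have hsqt : ∑ s, P s * (min (V s) (θ + ε)) ^ 2
          = θ ^ 2 + (2 * θ * ε + ε ^ 2) * p := by
        have h1 : ∀ s ∈ Finset.univ, P s * (min (V s) (θ + ε)) ^ 2
            = θ ^ 2 * P s + (2 * θ * ε + ε ^ 2) * (P s * χ s) := by
          intro s _
          by_cases hs : P s = 0
          · rw [hs]; ring
          · rw [hmin s hs, hχ]
            by_cases hc : θ < V s <;> simp [hc] <;> ring
        rw [Finset.sum_congr rfl h1, Finset.sum_add_distrib, ← Finset.mul_sum,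
          ← Finset.mul_sum, hP1, hPχ]
        ring
      have hVt : Vf (θ + ε) = ε ^ 2 * (p * (1 - p)) := by
        show (∑ s, P s * (min (V s) (θ + ε)) ^ 2) - (μf (θ + ε)) ^ 2 = _
        rw [hsqt, hμt]; ring
      have hGtlt : θ + ε * p + Real.sqrt (ε ^ 2 * (p * (1 - p)) / ρ) < θ + ε := by
        have : G (θ + ε) = μf (θ + ε) + Real.sqrt (Vf (θ + ε) / ρ) := rfl
        rw [this, hμt, hVt] at hGt
        exact hGt
      have hRpos : 0 < ε * (1 - p) := by
        have h1 := Real.sqrt_nonneg (ε ^ 2 * (p * (1 - p)) / ρ)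
        have h2 : 0 < ε - ε * p := by linarith [hGtlt]
        have h3 : ε * (1 - p) = ε - ε * p := by ring
        linarith
      have hp1 : p < 1 := by
        by_contra hcon
        push_neg at hcon
        have : ε * (1 - p) ≤ 0 := mul_nonpos_of_nonneg_of_nonpos hεpos.le (by linarith)
        linarith
      have hp2 : p ≤ ρ * (1 - p) := by
        have h1 : Real.sqrt (ε ^ 2 * (p * (1 - p)) / ρ) < ε * (1 - p) := by linarith
        have h2 : ε ^ 2 * (p * (1 - p)) / ρ < (ε * (1 - p)) ^ 2 :=
          (Real.sqrt_lt' hRpos).mp h1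
        have h3 : ε ^ 2 * (p * (1 - p)) < ρ * (ε * (1 - p)) ^ 2 := by
          rw [div_lt_iff₀ hρ] at h2; linarith [h2]
        have ha : 0 < ε ^ 2 * (1 - p) := mul_pos (by positivity) (by linarith)
        have h4 : (ε ^ 2 * (1 - p)) * p < (ε ^ 2 * (1 - p)) * (ρ * (1 - p)) := by
          nlinarith [h3]
        exact (lt_of_mul_lt_mul_left h4 ha.le).le
      exact construct_deg P V H ρ θ hρ hP hP1 hV hθ0 hμθ hVarform
        (by rw [← hp]; exact hp1) (by rw [← hp]; exact hp2)

end ChiSqDualAux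

/-- Dual formulation of the χ²-constrained robust expectation (CRMDP-χ²). -/
theorem chiSq_constrained_dual
    {S : Type*} [Fintype S] [Nonempty S]
    (P : S → ℝ) (hP : ∀ s, 0 ≤ P s) (hP1 : ∑ s, P s = 1)
    (H ρ : ℝ) (hH : 0 < H) (hρ : 0 < ρ)
    (V : S → ℝ) (hV : ∀ s, V s ∈ Set.Icc (0:ℝ) H) :
    sInf {x : ℝ | ∃ Q : S → ℝ, (∀ s, 0 ≤ Q s) ∧ (∑ s, Q s = 1) ∧
        (∀ s, P s = 0 → Q s = 0) ∧
        (∑ s, P s * (Q s / P s - 1) ^ 2) ≤ ρ ∧ x = ∑ s, Q s * V s}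
      = sSup {y : ℝ | ∃ lam : S → ℝ, (∀ s, lam s ∈ Set.Icc (0:ℝ) H) ∧
          y = (∑ s, P s * (V s - lam s))
              - Real.sqrt (ρ * ((∑ s, P s * (V s - lam s) ^ 2)
                  - (∑ s, P s * (V s - lam s)) ^ 2))} := by
  set Pset : Set ℝ := {x : ℝ | ∃ Q : S → ℝ, (∀ s, 0 ≤ Q s) ∧ (∑ s, Q s = 1) ∧
        (∀ s, P s = 0 → Q s = 0) ∧
        (∑ s, P s * (Q s / P s - 1) ^ 2) ≤ ρ ∧ x = ∑ s, Q s * V s} with hPset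
  set Dset : Set ℝ := {y : ℝ | ∃ lam : S → ℝ, (∀ s, lam s ∈ Set.Icc (0:ℝ) H) ∧
          y = (∑ s, P s * (V s - lam s))
              - Real.sqrt (ρ * ((∑ s, P s * (V s - lam s) ^ 2)
                  - (∑ s, P s * (V s - lam s)) ^ 2))} with hDset
  obtain ⟨Q, lam, hQ0, hQ1, habs, hchi, hlamIcc, hval⟩ := exists_pair P V H ρ hρ hH hP hP1 hV
  have hxmem : (∑ s, Q s * V s) ∈ Pset := ⟨Q, hQ0, hQ1, habs, hchi, rfl⟩
  have hymem : ((∑ s, P s * (V s - lam s))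
      - Real.sqrt (ρ * ((∑ s, P s * (V s - lam s) ^ 2)
          - (∑ s, P s * (V s - lam s)) ^ 2))) ∈ Dset := ⟨lam, hlamIcc, rfl⟩
  have hPbdd : BddBelow Pset := by
    refine ⟨0, fun x hx => ?_⟩
    obtain ⟨Q', hQ'0, _, _, _, hx⟩ := hx
    rw [hx]
    exact Finset.sum_nonneg fun s _ => mul_nonneg (hQ'0 s) (hV s).1
  have hDbdd : BddAbove Dset := by
    refine ⟨H, fun y hy => ?_⟩
    obtain ⟨lam', hlam', hy⟩ := hy
    have h1 : ∑ s, P s * (V s - lam' s) ≤ ∑ s, P s * V s :=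
      Finset.sum_le_sum fun s _ =>
        mul_le_mul_of_nonneg_left (by linarith [(hlam' s).1]) (hP s)
    have h2 : ∑ s, P s * V s ≤ H := by
      calc ∑ s, P s * V s ≤ ∑ s, P s * H :=
            Finset.sum_le_sum fun s _ => mul_le_mul_of_nonneg_left (hV s).2 (hP s)
        _ = H := by rw [← Finset.sum_mul, hP1, one_mul]
    have h3 := Real.sqrt_nonneg (ρ * ((∑ s, P s * (V s - lam' s) ^ 2)
        - (∑ s, P s * (V s - lam' s)) ^ 2))
    rw [hy]
    linarith
  apply le_antisymm
  · calc sInf Pset ≤ ∑ s, Q s * V s := csInf_le hPbdd hxmem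
      _ = _ := hval
      _ ≤ sSup Dset := le_csSup hDbdd hymem
  · apply le_csInf ⟨_, hxmem⟩
    rintro x ⟨Q', hQ'0, hQ'1, habs', hchi', hx⟩
    apply csSup_le ⟨_, hymem⟩
    rintro y ⟨lam', hlam', hy⟩
    rw [hx, hy]
    exact weak_dual P Q' V lam' ρ hρ.le hP hP1 hQ'0 hQ'1 habs' hchi' fun s => (hlam' s).1
end

section
/- Let S be a finite set, P° a probability distribution on S, V : S → [0, H] bounded, and β > 0. Then inf over probability distributions P on S of ( E_P[V] + β·TV(P, P°) ) equals ( min_{s∈S} V(s) + β ) − E_{P°}[ ( min_{s∈S} V(s) + β − V(s) )₊ ]. -/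
open Finset Real

/-- Closed-form dual of the TV-regularized robust Bellman operator (RRMDP-TV). -/
theorem tv_regularized_dual
    {S : Type*} [Fintype S] [Nonempty S]
    (P : S → ℝ) (hP : ∀ s, 0 ≤ P s) (hP1 : ∑ s, P s = 1)
    (H β : ℝ) (hH : 0 < H) (hβ : 0 < β)
    (V : S → ℝ) (hV : ∀ s, V s ∈ Set.Icc (0:ℝ) H) :
    sInf {x : ℝ | ∃ Q : S → ℝ, (∀ s, 0 ≤ Q s) ∧ (∑ s, Q s = 1) ∧
        x = (∑ s, Q s * V s) + β * ((1/2) * ∑ s, |Q s - P s|)}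
      = ((⨅ s, V s) + β) - ∑ s, P s * max ((⨅ s', V s') + β - V s) 0 := by
  classical
  set m := ⨅ s, V s with hm
  have hmle : ∀ s, m ≤ V s := fun s => ciInf_le (Finite.bddBelow_range V) s
  obtain ⟨s0, hs0min⟩ := Finite.exists_min V
  have hs0 : V s0 = m := le_antisymm (le_ciInf hs0min) (hmle s0)
  clear_value m
  set α := m + β with hα
  clear_value α
  -- rewrite the RHS
  have hRHS : α - ∑ s, P s * max (α - V s) 0 = ∑ s, P s * min (V s) α := by
    have h1 : α = ∑ s, P s * α := by rw [← Finset.sum_mul, hP1, one_mul]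
    nth_rewrite 1 [h1]
    rw [← Finset.sum_sub_distrib]
    refine Finset.sum_congr rfl fun s _ => ?_
    have h2 : P s * α - P s * max (α - V s) 0
        = P s * (α - max (α - V s) 0) := by ring
    rw [h2]
    congr 1
    rcases le_total (V s) α with h | h
    · rw [max_eq_left (by linarith), min_eq_left h]; ring
    · rw [max_eq_right (by linarith), min_eq_right h]; ring
  -- lower bound
  have key : ∀ Q : S → ℝ, (∀ s, 0 ≤ Q s) → (∑ s, Q s = 1) →
      ∑ s, P s * min (V s) α ≤ (∑ s, Q s * V s) + β * ((1/2) * ∑ s, |Q s - P s|) := by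
    intro Q hQ hQ1
    have hsum : (∑ s, Q s * V s) + β * ((1/2) * ∑ s, |Q s - P s|)
        = ∑ s, (Q s * V s + (β/2) * |Q s - P s|) := by
      rw [Finset.sum_add_distrib, ← Finset.mul_sum]; ring
    have hc : ∑ s, (m + β/2) * (Q s - P s) = 0 := by
      rw [← Finset.mul_sum, Finset.sum_sub_distrib, hQ1, hP1]; ring
    have hpt : ∀ s ∈ Finset.univ, P s * min (V s) α + (m + β/2) * (Q s - P s)
        ≤ Q s * V s + (β/2) * |Q s - P s| := by
      intro s _
      have ha1 : min (V s) α ≤ V s := min_le_left _ _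
      have ha2 : m ≤ min (V s) α := le_min (hmle s) (by simp [hα]; linarith)
      have ha3 : min (V s) α ≤ m + β := by simpa [hα] using min_le_right (V s) α
      rcases le_total (P s) (Q s) with h | h
      · rw [abs_of_nonneg (by linarith)]
        nlinarith [mul_nonneg (hQ s) (sub_nonneg.2 ha1),
          mul_nonneg (sub_nonneg.2 h) (sub_nonneg.2 ha2)]
      · rw [abs_of_nonpos (by linarith)]
        nlinarith [mul_nonneg (hQ s) (sub_nonneg.2 ha1),
          mul_nonneg (sub_nonneg.2 h) (sub_nonneg.2 ha3)]
    calc ∑ s, P s * min (V s) α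
        = ∑ s, (P s * min (V s) α + (m + β/2) * (Q s - P s)) := by
          rw [Finset.sum_add_distrib, hc, add_zero]
      _ ≤ ∑ s, (Q s * V s + (β/2) * |Q s - P s|) := Finset.sum_le_sum hpt
      _ = _ := hsum.symm
  -- the optimal Q
  set Δ : ℝ := ∑ s, if α < V s then P s else 0 with hΔdef
  have hΔ0 : 0 ≤ Δ := Finset.sum_nonneg fun s _ => by
    split_ifs with h; exacts [hP s, le_rfl]
  have hs0lt : ¬ α < V s0 := by rw [hs0]; simp [hα]; linarith
  set Q : S → ℝ := fun s => (if α < V s then 0 else P s) + (if s = s0 then Δ else 0)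
    with hQdef
  have hQ0 : ∀ s, 0 ≤ Q s := by
    intro s
    apply add_nonneg <;> split_ifs <;> first | exact hP s | exact hΔ0 | exact le_rfl
  have hQ1 : ∑ s, Q s = 1 := by
    rw [hQdef]
    rw [Finset.sum_add_distrib, Finset.sum_ite_eq' Finset.univ s0 (fun _ => Δ)]
    simp only [Finset.mem_univ, if_true]
    rw [← hP1, hΔdef, ← Finset.sum_add_distrib]
    refine Finset.sum_congr rfl fun s _ => ?_
    split_ifs <;> ring
  have hQV : ∑ s, Q s * V s = (∑ s, if α < V s then 0 else P s * V s) + Δ * m := by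
    have h1 : ∀ s, Q s * V s
        = (if α < V s then 0 else P s * V s) + (if s = s0 then Δ * V s else 0) := by
      intro s; simp only [hQdef]; split_ifs <;> ring
    rw [Finset.sum_congr rfl fun s _ => h1 s, Finset.sum_add_distrib,
      Finset.sum_ite_eq' Finset.univ s0 (fun s => Δ * V s)]
    simp [hs0]
  have habs : ∀ s, |Q s - P s|
      = (if s = s0 then Δ else 0) + (if α < V s then P s else 0) := by
    intro s
    by_cases h : s = s0
    · rw [h]
      have h2 : Q s0 - P s0 = Δ := by simp only [hQdef]; simp [hs0lt]
      rw [h2, abs_of_nonneg hΔ0]; simp [hs0lt]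
    · by_cases hlt : α < V s
      · have : Q s - P s = -(P s) := by rw [hQdef]; simp [hlt, h]
        rw [this, abs_neg, abs_of_nonneg (hP s)]; simp [hlt, h]
      · have : Q s - P s = 0 := by rw [hQdef]; simp [hlt, h]
        rw [this, abs_zero]; simp [hlt, h]
  have hsumabs : ∑ s, |Q s - P s| = Δ + Δ := by
    rw [Finset.sum_congr rfl fun s _ => habs s, Finset.sum_add_distrib,
      Finset.sum_ite_eq' Finset.univ s0 (fun _ => Δ)]
    simp [hΔdef]
  have hval : (∑ s, Q s * V s) + β * ((1/2) * ∑ s, |Q s - P s|)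
      = ∑ s, P s * min (V s) α := by
    rw [hQV, hsumabs]
    have h2 : (∑ s, if α < V s then 0 else P s * V s) + Δ * m
        + β * (1/2 * (Δ + Δ))
        = (∑ s, if α < V s then 0 else P s * V s) + Δ * (m + β) := by ring
    rw [h2, hΔdef, Finset.sum_mul, ← Finset.sum_add_distrib]
    refine Finset.sum_congr rfl fun s _ => ?_
    by_cases hlt : α < V s
    · rw [if_pos hlt, if_pos hlt, min_eq_right hlt.le, hα]; ring
    · rw [if_neg hlt, if_neg hlt, min_eq_left (not_lt.1 hlt)]; ring
  -- conclude
  set T : Set ℝ := {x : ℝ | ∃ Q : S → ℝ, (∀ s, 0 ≤ Q s) ∧ (∑ s, Q s = 1) ∧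
        x = (∑ s, Q s * V s) + β * ((1/2) * ∑ s, |Q s - P s|)} with hT
  have hmem : (∑ s, P s * min (V s) α) ∈ T := ⟨Q, hQ0, hQ1, hval.symm⟩
  have hlb : ∀ x ∈ T, ∑ s, P s * min (V s) α ≤ x := by
    rintro x ⟨Q', h0, h1, rfl⟩; exact key Q' h0 h1
  have : sInf T = ∑ s, P s * min (V s) α :=
    le_antisymm (csInf_le ⟨_, hlb⟩ hmem) (le_csInf ⟨_, hmem⟩ hlb)
  rw [this]; exact hRHS.symm
end

section
/- Let S be a finite set, P° a probability distribution on S with full support, V : S → ℝ bounded, and β > 0. Then inf over probability distributions P ≪ P° of ( E_P[V] + β·KL(P‖P°) ) equals −β·ln E_{P°}[exp(−V/β)], and the infimum is attained by P'(s) = P°(s)·exp(−V(s)/β) / E_{P°}[exp(−V/β)]. -/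
open Finset Real

/-- Closed-form solution of the KL-regularized robust expectation (RRMDP-KL),
with the infimum attained at the Gibbs distribution. -/
theorem kl_regularized_dual
    {S : Type*} [Fintype S] [Nonempty S]
    (P : S → ℝ) (hP : ∀ s, 0 < P s) (hP1 : ∑ s, P s = 1)
    (β : ℝ) (hβ : 0 < β) (V : S → ℝ) :
    sInf {x : ℝ | ∃ Q : S → ℝ, (∀ s, 0 ≤ Q s) ∧ (∑ s, Q s = 1) ∧
        x = (∑ s, Q s * V s) + β * (∑ s, Q s * Real.log (Q s / P s))}
      = -β * Real.log (∑ s, P s * Real.exp (-(V s) / β))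
    ∧ (let P' : S → ℝ := fun s =>
          P s * Real.exp (-(V s) / β) / (∑ s', P s' * Real.exp (-(V s') / β));
        (∑ s, P' s * V s) + β * (∑ s, P' s * Real.log (P' s / P s))
          = -β * Real.log (∑ s, P s * Real.exp (-(V s) / β))) := by
  classical
  set Z : ℝ := ∑ s, P s * Real.exp (-(V s) / β) with hZdef
  have hZpos : 0 < Z :=
    Finset.sum_pos (fun s _ => mul_pos (hP s) (Real.exp_pos _)) Finset.univ_nonempty
  set P' : S → ℝ := fun s => P s * Real.exp (-(V s) / β) / Z with hP'def
  have hP'pos : ∀ s, 0 < P' s := fun s => div_pos (mul_pos (hP s) (Real.exp_pos _)) hZpos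
  have hP'sum : ∑ s, P' s = 1 := by
    rw [hP'def]
    rw [← Finset.sum_div, div_self hZpos.ne']
  have hlP' : ∀ s, Real.log (P' s) = Real.log (P s) + (-(V s) / β) - Real.log Z := by
    intro s
    rw [hP'def]
    simp only
    rw [Real.log_div (mul_pos (hP s) (Real.exp_pos _)).ne' hZpos.ne',
        Real.log_mul (hP s).ne' (Real.exp_pos _).ne', Real.log_exp]
  have hattain : (∑ s, P' s * V s) + β * (∑ s, P' s * Real.log (P' s / P s))
      = -β * Real.log Z := by
    have key : ∀ s, P' s * V s + β * (P' s * Real.log (P' s / P s))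
        = (-β * Real.log Z) * P' s := by
      intro s
      rw [Real.log_div (hP'pos s).ne' (hP s).ne', hlP' s]
      field_simp
      ring
    calc (∑ s, P' s * V s) + β * (∑ s, P' s * Real.log (P' s / P s))
        = ∑ s, (P' s * V s + β * (P' s * Real.log (P' s / P s))) := by
          rw [Finset.mul_sum, Finset.sum_add_distrib]
      _ = ∑ s, (-β * Real.log Z) * P' s := Finset.sum_congr rfl (fun s _ => key s)
      _ = -β * Real.log Z := by rw [← Finset.mul_sum, hP'sum, mul_one]
  have hlb : ∀ x ∈ {x : ℝ | ∃ Q : S → ℝ, (∀ s, 0 ≤ Q s) ∧ (∑ s, Q s = 1) ∧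
      x = (∑ s, Q s * V s) + β * (∑ s, Q s * Real.log (Q s / P s))},
      -β * Real.log Z ≤ x := by
    rintro x ⟨Q, hQ0, hQ1, rfl⟩
    have gibbs : 0 ≤ ∑ s, Q s * Real.log (Q s / P' s) := by
      have h1 : ∀ s ∈ Finset.univ, Q s - P' s ≤ Q s * Real.log (Q s / P' s) := by
        intro s _
        rcases eq_or_lt_of_le (hQ0 s) with h | h
        · simp [← h, (hP'pos s).le]
        · have hx : 0 < P' s / Q s := div_pos (hP'pos s) h
          have h3 := Real.log_le_sub_one_of_pos hx
          have hQne : Q s ≠ 0 := h.ne'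
          have h4 : Q s * Real.log (P' s / Q s) ≤ P' s - Q s := by
            have hmul : Q s * (P' s / Q s) = P' s := by field_simp
            nlinarith
          have hlog : Real.log (P' s / Q s) = - Real.log (Q s / P' s) := by
            rw [← Real.log_inv, inv_div]
          rw [hlog, mul_neg] at h4
          linarith
      have h2 := Finset.sum_le_sum h1
      rw [Finset.sum_sub_distrib, hQ1, hP'sum] at h2
      linarith
    have hdecomp : ∀ s, Q s * V s + β * (Q s * Real.log (Q s / P s))
        = β * (Q s * Real.log (Q s / P' s)) + (-β * Real.log Z) * Q s := by
      intro s
      rcases eq_or_lt_of_le (hQ0 s) with h | h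
      · simp [← h]
      · rw [Real.log_div h.ne' (hP s).ne', Real.log_div h.ne' (hP'pos s).ne', hlP' s]
        field_simp
        ring
    have hsum : (∑ s, Q s * V s) + β * (∑ s, Q s * Real.log (Q s / P s))
        = β * (∑ s, Q s * Real.log (Q s / P' s)) + (-β * Real.log Z) := by
      calc (∑ s, Q s * V s) + β * (∑ s, Q s * Real.log (Q s / P s))
          = ∑ s, (Q s * V s + β * (Q s * Real.log (Q s / P s))) := by
            rw [Finset.mul_sum, Finset.sum_add_distrib]
        _ = ∑ s, (β * (Q s * Real.log (Q s / P' s)) + (-β * Real.log Z) * Q s) :=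
            Finset.sum_congr rfl (fun s _ => hdecomp s)
        _ = β * (∑ s, Q s * Real.log (Q s / P' s)) + (-β * Real.log Z) := by
            rw [Finset.sum_add_distrib, ← Finset.mul_sum, ← Finset.mul_sum, hQ1, mul_one]
    rw [hsum]
    nlinarith
  have hmem : (-β * Real.log Z) ∈ {x : ℝ | ∃ Q : S → ℝ, (∀ s, 0 ≤ Q s) ∧ (∑ s, Q s = 1) ∧
      x = (∑ s, Q s * V s) + β * (∑ s, Q s * Real.log (Q s / P s))} :=
    ⟨P', fun s => (hP'pos s).le, hP'sum, hattain.symm⟩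
  exact ⟨le_antisymm (csInf_le ⟨_, hlb⟩ hmem) (le_csInf ⟨_, hmem⟩ hlb), hattain⟩
end

section
/- Let S be a finite set, P° a probability distribution on S, V : S → [0, H] bounded, and β > 0. Then inf over probability distributions P ≪ P° of ( E_P[V] + β·χ²(P‖P°) ) equals sup over λ ∈ [0, H]^S of ( E_{P°}[V − λ] − (1/(4β))·Var_{P°}(V − λ) ). -/
open Finset Real

lemma key_identity' {S : Type*} [Fintype S]
    (P Q w : S → ℝ) (hP1 : ∑ s, P s = 1) (hQ1 : ∑ s, Q s = 1)
    (habs : ∀ s, P s = 0 → Q s = 0) (β : ℝ) (hβ : β ≠ 0) :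
    (∑ s, Q s * w s) + β * (∑ s, P s * (Q s / P s - 1) ^ 2)
      = ((∑ s, P s * w s)
          - (1 / (4 * β)) * ((∑ s, P s * (w s) ^ 2) - (∑ s, P s * w s) ^ 2))
        + β * ∑ s, P s * ((if P s = 0 then (0:ℝ) else Q s / P s - 1)
            + (w s - ∑ t, P t * w t) / (2 * β)) ^ 2 := by
  set E : ℝ := ∑ t, P t * w t with hE
  set u : S → ℝ := fun s => if P s = 0 then (0:ℝ) else Q s / P s - 1 with hu
  have h1 : ∀ s, P s * u s = Q s - P s := by
    intro s
    by_cases h : P s = 0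
    · simp [hu, h, habs s h]
    · simp only [hu, h, if_false]
      field_simp
  have h2 : ∑ s, P s * (Q s / P s - 1) ^ 2 = ∑ s, P s * (u s) ^ 2 := by
    refine Finset.sum_congr rfl fun s _ => ?_
    by_cases h : P s = 0
    · simp [h]
    · simp [hu, h]
  have expand : ∀ s, P s * (u s + (w s - E) / (2 * β)) ^ 2
      = P s * (u s) ^ 2 + (Q s - P s) * ((w s - E) / β)
        + P s * ((w s - E) ^ 2 / (4 * β ^ 2)) := by
    intro s
    have := h1 s
    linear_combination ((w s - E) / β) * this
  have hc1 : ∑ s, (Q s - P s) * (w s - E) = (∑ s, Q s * w s) - E := by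
    have : ∀ s, (Q s - P s) * (w s - E) = Q s * w s - P s * w s - E * Q s + E * P s :=
      fun s => by ring
    simp only [this, Finset.sum_add_distrib, Finset.sum_sub_distrib, ← Finset.mul_sum,
      hP1, hQ1, ← hE]
    ring
  have hs1 : ∑ s, (Q s - P s) * ((w s - E) / β) = ((∑ s, Q s * w s) - E) / β := by
    have e : ∀ s, (Q s - P s) * ((w s - E) / β) = ((Q s - P s) * (w s - E)) / β :=
      fun s => by ring
    simp only [e, ← Finset.sum_div, hc1]
  have hc2 : ∑ s, P s * (w s - E) ^ 2 = (∑ s, P s * (w s) ^ 2) - E ^ 2 := by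
    have : ∀ s, P s * (w s - E) ^ 2 = P s * w s ^ 2 - 2 * E * (P s * w s) + E ^ 2 * P s :=
      fun s => by ring
    simp only [this, Finset.sum_add_distrib, Finset.sum_sub_distrib, ← Finset.mul_sum,
      hP1, ← hE]
    ring
  have hs2 : ∑ s, P s * ((w s - E) ^ 2 / (4 * β ^ 2))
      = ((∑ s, P s * (w s) ^ 2) - E ^ 2) / (4 * β ^ 2) := by
    have e : ∀ s, P s * ((w s - E) ^ 2 / (4 * β ^ 2)) = (P s * (w s - E) ^ 2) / (4 * β ^ 2) :=
      fun s => by ring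
    simp only [e, ← Finset.sum_div, hc2]
  rw [h2]
  simp only [show ∀ s, (if P s = 0 then (0:ℝ) else Q s / P s - 1) = u s from fun s => rfl]
  simp only [expand, Finset.sum_add_distrib, hs1, hs2]
  field_simp
  ring

/-- Dual formulation of the χ²-regularized robust expectation (RRMDP-χ²). -/
theorem chiSq_regularized_dual
    {S : Type*} [Fintype S] [Nonempty S]
    (P : S → ℝ) (hP : ∀ s, 0 ≤ P s) (hP1 : ∑ s, P s = 1)
    (H β : ℝ) (hH : 0 < H) (hβ : 0 < β)
    (V : S → ℝ) (hV : ∀ s, V s ∈ Set.Icc (0:ℝ) H) :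
    sInf {x : ℝ | ∃ Q : S → ℝ, (∀ s, 0 ≤ Q s) ∧ (∑ s, Q s = 1) ∧
        (∀ s, P s = 0 → Q s = 0) ∧
        x = (∑ s, Q s * V s) + β * (∑ s, P s * (Q s / P s - 1) ^ 2)}
      = sSup {y : ℝ | ∃ lam : S → ℝ, (∀ s, lam s ∈ Set.Icc (0:ℝ) H) ∧
          y = (∑ s, P s * (V s - lam s))
              - (1 / (4 * β)) * ((∑ s, P s * (V s - lam s) ^ 2)
                  - (∑ s, P s * (V s - lam s)) ^ 2)} := by
  have hβ' : (β : ℝ) ≠ 0 := ne_of_gt hβ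
  have h2β : (0:ℝ) < 2 * β := by linarith
  set A : Set ℝ := {x : ℝ | ∃ Q : S → ℝ, (∀ s, 0 ≤ Q s) ∧ (∑ s, Q s = 1) ∧
        (∀ s, P s = 0 → Q s = 0) ∧
        x = (∑ s, Q s * V s) + β * (∑ s, P s * (Q s / P s - 1) ^ 2)} with hA
  set B : Set ℝ := {y : ℝ | ∃ lam : S → ℝ, (∀ s, lam s ∈ Set.Icc (0:ℝ) H) ∧
          y = (∑ s, P s * (V s - lam s))
              - (1 / (4 * β)) * ((∑ s, P s * (V s - lam s) ^ 2)
                  - (∑ s, P s * (V s - lam s)) ^ 2)} with hB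
  -- weak duality
  have weak : ∀ x ∈ A, ∀ y ∈ B, y ≤ x := by
    rintro x ⟨Q, hQ0, hQ1, habs, rfl⟩ y ⟨lam, hlam, rfl⟩
    set w : S → ℝ := fun s => V s - lam s with hw
    have key := key_identity' P Q w hP1 hQ1 habs β hβ'
    have h1 : (∑ s, Q s * w s) ≤ ∑ s, Q s * V s := by
      refine Finset.sum_le_sum fun s _ => ?_
      have := (hlam s).1
      have := hQ0 s
      simp only [hw]
      nlinarith
    have h2 : 0 ≤ β * ∑ s, P s * ((if P s = 0 then (0:ℝ) else Q s / P s - 1)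
            + (w s - ∑ t, P t * w t) / (2 * β)) ^ 2 := by
      refine mul_nonneg (le_of_lt hβ) (Finset.sum_nonneg fun s _ =>
        mul_nonneg (hP s) (sq_nonneg _))
    simp only [hw] at key ⊢
    linarith
  -- nonempty A (take Q = P)
  have hA0 : ((∑ s, P s * V s) + β * (∑ s, P s * (P s / P s - 1) ^ 2)) ∈ A := by
    refine ⟨P, hP, hP1, fun s h => h, rfl⟩
  have hAne : A.Nonempty := ⟨_, hA0⟩
  -- nonempty B (take lam = 0)
  have hB0 : ((∑ s, P s * (V s - 0)) - (1 / (4 * β)) * ((∑ s, P s * (V s - 0) ^ 2)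
                  - (∑ s, P s * (V s - 0)) ^ 2)) ∈ B := by
    exact ⟨fun _ => 0, fun s => ⟨le_refl _, le_of_lt hH⟩, rfl⟩
  have hBne : B.Nonempty := ⟨_, hB0⟩
  have hAbdd : BddBelow A := ⟨_, fun x hx => weak x hx _ hB0⟩
  have hBbdd : BddAbove B := ⟨_, fun y hy => weak _ hA0 y hy⟩
  -- the optimal dual multiplier via IVT
  set φ : ℝ → ℝ := fun μ => ∑ s, P s * max 0 (1 + (μ - V s) / (2 * β)) with hφ
  have hcont : ContinuousOn φ (Set.Icc (-(2*β)) H) := by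
    apply Continuous.continuousOn
    apply continuous_finset_sum
    intro s _
    exact continuous_const.mul (continuous_const.max (by fun_prop))
  have hφa : φ (-(2*β)) = 0 := by
    refine Finset.sum_eq_zero fun s _ => ?_
    have h1 : 1 + (-(2*β) - V s) / (2 * β) ≤ 0 := by
      have h2 : (-(2*β) - V s) / (2 * β) ≤ -1 := by
        rw [div_le_iff₀ h2β]
        nlinarith [(hV s).1]
      linarith
    rw [max_eq_left h1, mul_zero]
  have hφb : 1 ≤ φ H := by
    rw [hφ]
    calc (1:ℝ) = ∑ s, P s * 1 := by simp [hP1]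
    _ ≤ _ := by
        refine Finset.sum_le_sum fun s _ => ?_
        refine mul_le_mul_of_nonneg_left ?_ (hP s)
        refine le_max_of_le_right ?_
        have : 0 ≤ (H - V s) / (2 * β) := div_nonneg (by linarith [(hV s).2]) (le_of_lt h2β)
        linarith
  have hIVT : ∃ μ ∈ Set.Icc (-(2*β)) H, φ μ = 1 := by
    have hab : -(2*β) ≤ H := by linarith
    have := intermediate_value_Icc hab hcont
    have h1 : (1:ℝ) ∈ Set.Icc (φ (-(2*β))) (φ H) := by
      rw [hφa]; exact ⟨zero_le_one, hφb⟩
    obtain ⟨μ, hμ, hμ1⟩ := this h1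
    exact ⟨μ, hμ, hμ1⟩
  obtain ⟨μ, hμmem, hμ⟩ := hIVT
  have hμlb : -(2*β) ≤ μ := hμmem.1
  -- optimal primal and dual
  set w : S → ℝ := fun s => min (V s) (μ + 2 * β) with hw
  set lam : S → ℝ := fun s => V s - w s with hlam
  set Q : S → ℝ := fun s => P s * ((μ + 2 * β - w s) / (2 * β)) with hQ
  have hQeq : ∀ s, Q s = P s * max 0 (1 + (μ - V s) / (2 * β)) := by
    intro s
    have hmax : max 0 (1 + (μ - V s) / (2 * β)) = (μ + 2 * β - w s) / (2 * β) := by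
      have he : 1 + (μ - V s) / (2 * β) = (μ + 2 * β - V s) / (2 * β) := by
        field_simp
        ring
      rcases le_total (V s) (μ + 2 * β) with h | h
      · rw [he, hw]
        simp only [min_eq_left h]
        exact max_eq_right (div_nonneg (by linarith) (le_of_lt h2β))
      · rw [he, hw]
        simp only [min_eq_right h]
        rw [sub_self, zero_div]
        exact max_eq_left (div_nonpos_of_nonpos_of_nonneg (by linarith) (le_of_lt h2β))
    rw [hQ, hmax]
  have hQ0 : ∀ s, 0 ≤ Q s := by
    intro s; rw [hQeq s]
    exact mul_nonneg (hP s) (le_max_left _ _)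
  have hQ1 : ∑ s, Q s = 1 := by
    rw [show ∑ s, Q s = φ μ from Finset.sum_congr rfl fun s _ => hQeq s]
    exact hμ
  have habs : ∀ s, P s = 0 → Q s = 0 := by
    intro s h; rw [hQ]; simp [h]
  -- E = μ
  have hE : ∑ s, P s * w s = μ := by
    have h1 : ∑ s, Q s = ((μ + 2 * β) - ∑ s, P s * w s) / (2 * β) := by
      rw [hQ]
      have e : ∀ s, P s * ((μ + 2 * β - w s) / (2 * β))
          = (P s * (μ + 2 * β) - P s * w s) / (2 * β) := fun s => by ring
      simp only [e, ← Finset.sum_div, Finset.sum_sub_distrib, ← Finset.sum_mul, hP1]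
      ring_nf
    rw [hQ1] at h1
    field_simp at h1
    linarith
  -- lam is feasible
  have hlamF : ∀ s, lam s ∈ Set.Icc (0:ℝ) H := by
    intro s
    constructor
    · simp only [hlam, hw, sub_nonneg]; exact min_le_left _ _
    · have hw0 : 0 ≤ w s := le_min (hV s).1 (by linarith)
      have := (hV s).2
      simp only [hlam]; linarith
  -- complementary slackness : Q s * lam s = 0
  have hcs : ∀ s, Q s * lam s = 0 := by
    intro s
    rcases le_total (V s) (μ + 2 * β) with h | h
    · have : lam s = 0 := by simp [hlam, hw, min_eq_left h]
      rw [this, mul_zero]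
    · have : Q s = 0 := by
        rw [hQ]; simp only [hw, min_eq_right h]
        rw [sub_self, zero_div, mul_zero]
      rw [this, zero_mul]
  -- equality of primal and dual values at the optimum
  have hkey := key_identity' P Q w hP1 hQ1 habs β hβ'
  have hrem : (∑ s, P s * ((if P s = 0 then (0:ℝ) else Q s / P s - 1)
            + (w s - ∑ t, P t * w t) / (2 * β)) ^ 2) = 0 := by
    refine Finset.sum_eq_zero fun s _ => ?_
    by_cases h : P s = 0
    · rw [h, zero_mul]
    · have hQP : Q s / P s = (μ + 2 * β - w s) / (2 * β) := by
        rw [hQ]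
        exact mul_div_cancel_left₀ _ h
      simp only [h, if_false, hQP, hE]
      have : (μ + 2 * β - w s) / (2 * β) - 1 + (w s - μ) / (2 * β) = 0 := by
        field_simp
        ring
      rw [this]
      simp
  have hQV : ∑ s, Q s * V s = ∑ s, Q s * w s := by
    refine Finset.sum_congr rfl fun s _ => ?_
    have := hcs s
    simp only [hlam] at this
    nlinarith [hcs s]
  have hmain : (∑ s, Q s * V s) + β * (∑ s, P s * (Q s / P s - 1) ^ 2)
      = (∑ s, P s * w s)
          - (1 / (4 * β)) * ((∑ s, P s * (w s) ^ 2) - (∑ s, P s * w s) ^ 2) := by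
    rw [hQV, hkey, hrem, mul_zero, add_zero]
  -- membership
  have haA : ((∑ s, Q s * V s) + β * (∑ s, P s * (Q s / P s - 1) ^ 2)) ∈ A :=
    ⟨Q, hQ0, hQ1, habs, rfl⟩
  have hbB : ((∑ s, P s * (V s - lam s))
              - (1 / (4 * β)) * ((∑ s, P s * (V s - lam s) ^ 2)
                  - (∑ s, P s * (V s - lam s)) ^ 2)) ∈ B :=
    ⟨lam, hlamF, rfl⟩
  have hwlam : ∀ s, V s - lam s = w s := fun s => by simp [hlam]
  have hab : ((∑ s, Q s * V s) + β * (∑ s, P s * (Q s / P s - 1) ^ 2))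
      = ((∑ s, P s * (V s - lam s))
              - (1 / (4 * β)) * ((∑ s, P s * (V s - lam s) ^ 2)
                  - (∑ s, P s * (V s - lam s)) ^ 2)) := by
    simp only [hwlam]
    exact hmain
  refine le_antisymm ?_ ?_
  · calc sInf A ≤ _ := csInf_le hAbdd haA
    _ = _ := hab
    _ ≤ sSup B := le_csSup hBbdd hbB
  · exact csSup_le hBne fun y hy => le_csInf hAne fun x hx => weak x hx y hy
end

section
/- Let P and Q be probability measures on the same measurable space and A any measurable event. Then P(A) + Q(Aᶜ) ≥ (1/2)·exp(−KL(P‖Q)). -/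
open MeasureTheory Real Classical

/-- `exp(-KL(P‖Q))` as an `ℝ≥0⊤`-valued quantity, equal to `0` when the
Kullback-Leibler divergence is `+⊤` (in particular when `P` is not absolutely
continuous with respect to `Q`). -/
noncomputable def expNegKL {α : Type*} [MeasurableSpace α] (P Q : Measure α) : ENNReal :=
  if P ≪ Q ∧ Integrable (llr P Q) P then ENNReal.ofReal (Real.exp (- ∫ x, llr P Q x ∂P))
  else 0

lemma rpow_half_sq (x : ENNReal) : x ^ (1/2 : ℝ) * x ^ (1/2 : ℝ) = x := by
  rw [← sq, ← ENNReal.rpow_natCast (x ^ (1/2 : ℝ)) 2, ← ENNReal.rpow_mul]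
  norm_num

/-- Bretagnolle–Huber inequality: `P(A) + Q(Aᶜ) ≥ (1/2)·exp(−KL(P‖Q))`. -/
theorem bretagnolle_huber {α : Type*} [MeasurableSpace α]
    (P Q : Measure α) [IsProbabilityMeasure P] [IsProbabilityMeasure Q]
    (A : Set α) (hA : MeasurableSet A) :
    (1/2 : ENNReal) * expNegKL P Q ≤ P A + Q Aᶜ := by
  rw [expNegKL]
  by_cases hc : P ≪ Q ∧ Integrable (llr P Q) P
  swap
  · simp [hc]
  rw [if_pos hc]
  obtain ⟨hPQ, hint⟩ := hc
  set g : α → ENNReal := P.rnDeriv Q with hg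
  have hgm : Measurable g := Measure.measurable_rnDeriv P Q
  -- a.e. facts
  have hg_pos : ∀ᵐ x ∂P, 0 < g x := Measure.rnDeriv_pos hPQ
  have hg_fin : ∀ᵐ x ∂P, g x < ⊤ := hPQ.ae_le (Measure.rnDeriv_lt_top P Q)
  -- the ENNReal-valued function (dP/dQ)^{-1/2}
  set h' : α → ENNReal := fun x => g x ^ (-(1/2) : ℝ) with hh'
  have hh'm : Measurable h' := hgm.pow_const _
  set I : ENNReal := ∫⁻ x, h' x ∂P with hI
  -- change of measure: I = ∫⁻ √g dQ
  have hIQ : I = ∫⁻ x, g x ^ (1/2 : ℝ) ∂Q := by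
    rw [hI, ← lintegral_rnDeriv_mul hPQ hh'm.aemeasurable]
    refine lintegral_congr_ae ?_
    filter_upwards [Measure.rnDeriv_lt_top P Q] with x hx
    by_cases h0 : g x = 0
    · show g x * g x ^ (-(1/2) : ℝ) = g x ^ (1/2 : ℝ)
      rw [h0, zero_mul, ENNReal.zero_rpow_of_pos (by norm_num)]
    · show g x * g x ^ (-(1/2) : ℝ) = g x ^ (1/2 : ℝ)
      nth_rewrite 1 [← ENNReal.rpow_one (g x)]
      rw [← ENNReal.rpow_add _ _ h0 hx.ne]
      norm_num
  -- Cauchy-Schwarz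
  set m : ENNReal := ∫⁻ x, min (g x) 1 ∂Q with hm
  set M : ENNReal := ∫⁻ x, max (g x) 1 ∂Q with hM
  have hCS : I ≤ m ^ (1/2 : ℝ) * M ^ (1/2 : ℝ) := by
    rw [hIQ]
    have hmul : ∀ x, g x ^ (1/2 : ℝ)
        = ((fun x => min (g x) 1 ^ (1/2 : ℝ)) * fun x => max (g x) 1 ^ (1/2 : ℝ)) x := by
      intro x
      simp only [Pi.mul_apply]
      rw [← ENNReal.mul_rpow_of_nonneg _ _ (by norm_num), min_mul_max]
      simp
    calc ∫⁻ x, g x ^ (1/2 : ℝ) ∂Q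
        = ∫⁻ x, ((fun x => min (g x) 1 ^ (1/2 : ℝ)) * fun x => max (g x) 1 ^ (1/2 : ℝ)) x ∂Q := by
          exact lintegral_congr fun x => hmul x
      _ ≤ (∫⁻ x, (min (g x) 1 ^ (1/2 : ℝ)) ^ (2:ℝ) ∂Q) ^ (1/2 : ℝ)
          * (∫⁻ x, (max (g x) 1 ^ (1/2 : ℝ)) ^ (2:ℝ) ∂Q) ^ (1/2 : ℝ) := by
          exact ENNReal.lintegral_mul_le_Lp_mul_Lq Q (Real.holderConjugate_iff.mpr ⟨by norm_num, by norm_num⟩ : (2:ℝ).HolderConjugate 2)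
            ((hgm.min measurable_const).pow_const _).aemeasurable
            ((hgm.max measurable_const).pow_const _).aemeasurable
      _ = m ^ (1/2 : ℝ) * M ^ (1/2 : ℝ) := by
          rw [hm, hM]
          congr 1 <;> congr 1 <;> refine lintegral_congr fun x => ?_ <;>
            rw [← ENNReal.rpow_mul] <;> norm_num
  have hm_le : m ≤ P A + Q Aᶜ := by
    rw [hm, ← lintegral_add_compl _ hA]
    gcongr
    · calc ∫⁻ x in A, min (g x) 1 ∂Q ≤ ∫⁻ x in A, g x ∂Q :=
            lintegral_mono fun x => min_le_left _ _
        _ ≤ P A := Measure.setLIntegral_rnDeriv_le A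
    · calc ∫⁻ x in Aᶜ, min (g x) 1 ∂Q ≤ ∫⁻ _ in Aᶜ, 1 ∂Q :=
            lintegral_mono fun x => min_le_right _ _
        _ = Q Aᶜ := by simp
  have hm_one : m ≤ 1 := by
    calc m ≤ ∫⁻ _, 1 ∂Q := lintegral_mono fun x => min_le_right _ _
      _ = 1 := by simp
  have hM_le : M ≤ 2 := by
    calc M ≤ ∫⁻ x, g x + 1 ∂Q := lintegral_mono fun x => max_le le_self_add le_add_self
      _ = (∫⁻ x, g x ∂Q) + 1 := by rw [lintegral_add_right _ measurable_const]; simp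
      _ ≤ P Set.univ + 1 := by gcongr; exact Measure.lintegral_rnDeriv_le
      _ = 2 := by simp; norm_num
  -- I is finite and nonzero
  have hI_ne_top : I ≠ ⊤ := by
    refine ne_top_of_le_ne_top ?_ hCS
    exact ENNReal.mul_ne_top
      (ENNReal.rpow_ne_top_of_nonneg (by norm_num) (ne_top_of_le_ne_top ENNReal.one_ne_top hm_one))
      (ENNReal.rpow_ne_top_of_nonneg (by norm_num) (ne_top_of_le_ne_top (by norm_num) hM_le))
  have hh'_fin : ∀ᵐ x ∂P, h' x < ⊤ := by
    filter_upwards [hg_pos] with x hx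
    rw [hh']
    simp only [lt_top_iff_ne_top, ne_eq, ENNReal.rpow_eq_top_iff]
    push_neg
    constructor
    · intro h0; exact absurd h0 hx.ne'
    · intro _; norm_num
  have hh'_pos : ∀ᵐ x ∂P, 0 < h' x := by
    filter_upwards [hg_fin] with x hx
    rw [hh']
    simp only [pos_iff_ne_zero, ne_eq, ENNReal.rpow_eq_zero_iff]
    push_neg
    constructor
    · intro _; norm_num
    · intro h0; exact absurd h0 hx.ne
  have hI_ne_zero : I ≠ 0 := by
    intro h0
    rw [hI, lintegral_eq_zero_iff' hh'm.aemeasurable] at h0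
    have hF : ∀ᵐ x ∂P, False := by
      filter_upwards [hh'_pos, h0] with x hx hx0
      simp at hx0
      exact hx.ne' hx0
    have hP0 : P = 0 := by simpa using hF
    have h1 : (1 : ENNReal) = 0 := by rw [← measure_univ (μ := P), hP0]; simp
    simp at h1
  -- the real-valued function h = toReal ∘ h'
  set h : α → ℝ := fun x => (h' x).toReal with hhr
  have hh_int : Integrable h P :=
    integrable_toReal_of_lintegral_ne_top hh'm.aemeasurable hI_ne_top
  have hh_int_eq : ∫ x, h x ∂P = I.toReal :=
    integral_toReal hh'm.aemeasurable hh'_fin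
  set c : ℝ := I.toReal with hcdef
  have hc_pos : 0 < c := ENNReal.toReal_pos hI_ne_zero hI_ne_top
  -- log h = -(1/2) * llr
  have hlogh : ∀ᵐ x ∂P, Real.log (h x) = (-(1/2)) * llr P Q x := by
    filter_upwards [hg_pos, hg_fin] with x hx0 hxt
    have htr : 0 < (g x).toReal := ENNReal.toReal_pos hx0.ne' hxt.ne
    rw [hhr]
    simp only
    rw [hh', ← ENNReal.toReal_rpow, Real.log_rpow htr]
    rfl
  -- Jensen via log t ≤ t - 1
  have hptwise : ∀ᵐ x ∂P, Real.log (h x) ≤ h x / c - 1 + Real.log c := by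
    filter_upwards [hh'_pos, hh'_fin] with x hx0 hxt
    have hhx : 0 < h x := ENNReal.toReal_pos hx0.ne' hxt.ne
    have := Real.log_le_sub_one_of_pos (div_pos hhx hc_pos)
    rw [Real.log_div hhx.ne' hc_pos.ne'] at this
    linarith
  have hloghint : Integrable (fun x => Real.log (h x)) P :=
    (hint.const_mul (-(1/2))).congr (by filter_upwards [hlogh] with x hx; rw [hx])
  have hint1 : Integrable (fun x => h x / c - 1) P := by
    exact (hh_int.div_const c).sub (integrable_const 1)
  have hjensen : ∫ x, Real.log (h x) ∂P ≤ Real.log c := by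
    calc ∫ x, Real.log (h x) ∂P ≤ ∫ x, (h x / c - 1 + Real.log c) ∂P := by
          refine integral_mono_ae hloghint ?_ hptwise
          exact hint1.add (integrable_const _)
      _ = Real.log c := by
          rw [integral_add hint1 (integrable_const _),
            integral_sub (hh_int.div_const c) (integrable_const 1)]
          simp [integral_div, hh_int_eq, ← hcdef, div_self hc_pos.ne']
  have hintlog : ∫ x, Real.log (h x) ∂P = (-(1/2)) * ∫ x, llr P Q x ∂P := by
    rw [← integral_const_mul]
    exact integral_congr_ae hlogh
  -- exp(-KL) ≤ c^2
  have hexp : Real.exp (- ∫ x, llr P Q x ∂P) ≤ c^2 := by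
    have h1 : - ∫ x, llr P Q x ∂P ≤ 2 * Real.log c := by
      rw [hintlog] at hjensen; linarith
    calc Real.exp (- ∫ x, llr P Q x ∂P) ≤ Real.exp (2 * Real.log c) := Real.exp_le_exp.2 h1
      _ = c^2 := by
        rw [show (2:ℝ) * Real.log c = Real.log (c^2) by rw [Real.log_pow]; norm_num,
          Real.exp_log (by positivity)]
  -- conclude in ENNReal
  have hfinal : ENNReal.ofReal (Real.exp (- ∫ x, llr P Q x ∂P)) ≤ 2 * (P A + Q Aᶜ) := by
    calc ENNReal.ofReal (Real.exp (- ∫ x, llr P Q x ∂P)) ≤ ENNReal.ofReal (c^2) :=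
          ENNReal.ofReal_le_ofReal hexp
      _ = I * I := by
          rw [sq, ENNReal.ofReal_mul hc_pos.le, hcdef, ENNReal.ofReal_toReal hI_ne_top]
      _ ≤ (m ^ (1/2:ℝ) * M ^ (1/2:ℝ)) * (m ^ (1/2:ℝ) * M ^ (1/2:ℝ)) := by gcongr
      _ = m * M := by
          rw [mul_mul_mul_comm, rpow_half_sq, rpow_half_sq]
      _ ≤ (P A + Q Aᶜ) * 2 := by gcongr
      _ = 2 * (P A + Q Aᶜ) := mul_comm _ _
  calc (1/2 : ENNReal) * ENNReal.ofReal (Real.exp (- ∫ x, llr P Q x ∂P))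
      ≤ (1/2 : ENNReal) * (2 * (P A + Q Aᶜ)) := by gcongr
    _ = P A + Q Aᶜ := by
        rw [← mul_assoc, one_div, ENNReal.inv_mul_cancel (by norm_num) ENNReal.ofNat_ne_top,
          one_mul]
end

section
/- For all real β > 0 and Δ ∈ [0, 1/2], −β·ln(p·e^{−Δ/β} + (1 − p)·e^{−1/β}) + β·ln(p + (1 − p)·e^{−1/β}) ≥ (p / (p + (1 − p)·e^{−1/β})) · (1/(1 + 1/β)) · Δ for every p ∈ (0, 1). -/
open Real

/-- Per-episode regret lower bound estimate in the KL-regularized setting. -/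
theorem kl_regret_gap_lower_bound
    (β Δ p : ℝ) (hβ : 0 < β) (hΔ : Δ ∈ Set.Icc (0:ℝ) (1/2)) (hp : p ∈ Set.Ioo (0:ℝ) 1) :
    (p / (p + (1 - p) * Real.exp (-1/β))) * (1 / (1 + 1/β)) * Δ
      ≤ -β * Real.log (p * Real.exp (-Δ/β) + (1 - p) * Real.exp (-1/β))
        + β * Real.log (p + (1 - p) * Real.exp (-1/β)) := by
  obtain ⟨hΔ0, hΔ2⟩ := hΔ
  obtain ⟨hp0, hp1⟩ := hp
  have hE1 : (0:ℝ) < Real.exp (-1/β) := Real.exp_pos _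
  have hEΔ : (0:ℝ) < Real.exp (-Δ/β) := Real.exp_pos _
  set Z : ℝ := p + (1 - p) * Real.exp (-1/β) with hZdef
  set A : ℝ := p * Real.exp (-Δ/β) + (1 - p) * Real.exp (-1/β) with hAdef
  have hZ : 0 < Z := by rw [hZdef]; nlinarith
  have hA : 0 < A := by rw [hAdef]; nlinarith
  -- Step 1: log A - log Z ≤ A/Z - 1
  have hlog : Real.log A - Real.log Z ≤ A / Z - 1 := by
    rw [← Real.log_div hA.ne' hZ.ne']
    exact Real.log_le_sub_one_of_pos (by positivity)
  -- So RHS ≥ β * (Z - A) / Z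
  have h1 : β * (Z - A) / Z ≤ -β * Real.log A + β * Real.log Z := by
    have h := mul_le_mul_of_nonneg_left hlog hβ.le
    have hZA : β * (Z - A) / Z = β * (1 - A / Z) := by field_simp
    nlinarith [h]
  have hZA : Z - A = p * (1 - Real.exp (-Δ/β)) := by rw [hZdef, hAdef]; ring
  -- Step 2: 1 - exp(-t) ≥ t/(1+t) for t = Δ/β
  have ht : 0 ≤ Δ / β := by positivity
  have hexp : Real.exp (-Δ/β) ≤ 1 / (1 + Δ/β) := by
    rw [neg_div, Real.exp_neg, one_div]
    apply inv_anti₀ (by linarith)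
    have := Real.add_one_le_exp (Δ/β)
    linarith
  have h2 : Δ / (1 + 1/β) ≤ β * (1 - Real.exp (-Δ/β)) := by
    have h3 : 1 - 1 / (1 + Δ/β) ≤ 1 - Real.exp (-Δ/β) := by linarith
    have h4 : 1 - 1 / (1 + Δ/β) = (Δ/β) / (1 + Δ/β) := by field_simp; ring
    have heq : β * ((Δ/β) / (1 + Δ/β)) = Δ / (1 + Δ/β) := by
      field_simp
    have hle : 1 + Δ/β ≤ 1 + 1/β := by
      have : Δ/β ≤ 1/β := by gcongr; linarith
      linarith
    have h5 : Δ / (1 + 1/β) ≤ Δ / (1 + Δ/β) :=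
      div_le_div_of_nonneg_left hΔ0 (by positivity) hle
    have h6 : β * (1 - 1 / (1 + Δ/β)) ≤ β * (1 - Real.exp (-Δ/β)) := by
      apply mul_le_mul_of_nonneg_left h3 hβ.le
    rw [h4, heq] at h6
    linarith
  -- Combine
  have key : p * (1 / (1 + 1/β)) * Δ ≤ β * (p * (1 - Real.exp (-Δ/β))) := by
    have := mul_le_mul_of_nonneg_left h2 hp0.le
    calc p * (1 / (1 + 1/β)) * Δ = p * (Δ / (1 + 1/β)) := by ring
      _ ≤ p * (β * (1 - Real.exp (-Δ/β))) := this
      _ = β * (p * (1 - Real.exp (-Δ/β))) := by ring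
  have hfinal : (p / Z) * (1 / (1 + 1/β)) * Δ ≤ β * (Z - A) / Z := by
    rw [hZA]
    calc (p / Z) * (1 / (1 + 1/β)) * Δ = (p * (1 / (1 + 1/β)) * Δ) / Z := by ring
      _ ≤ (β * (p * (1 - Real.exp (-Δ/β)))) / Z := by gcongr
  linarith [hfinal, h1]
end

section
/- Let β > 0, p ∈ (0, 1), and V : {s₂, s₃} → ℝ with V(s₂) ∈ [0, 1), V(s₃) = 1. Consider minimizing over p' ∈ [0, 1] the objective p'·V(s₂) + (1 − p') + β·(p·(p'/p − 1)² + (1 − p)·((1 − p')/(1 − p) − 1)²). Then the minimizer is p' = p + p(1 − p)(1 − V(s₂))/(2β) (when this lies in [0,1]), and the minimum value equals p·V(s₂) + (1 − p) − p(1 − p)(1 − V(s₂))²/(4β). -/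
open Real

/-- Explicit solution of the one-step χ²-regularized robust optimization on a
two-point state space with values `v` (at `s₂`) and `1` (at `s₃`). -/
theorem chiSq_two_point_minimizer
    (β p v : ℝ) (hβ : 0 < β) (hp : p ∈ Set.Ioo (0:ℝ) 1) (hv : v ∈ Set.Ico (0:ℝ) 1)
    (g : ℝ → ℝ)
    (hg : ∀ p', g p' = p' * v + (1 - p')
        + β * (p * (p' / p - 1) ^ 2 + (1 - p) * ((1 - p') / (1 - p) - 1) ^ 2))
    (hin : p + p * (1 - p) * (1 - v) / (2 * β) ∈ Set.Icc (0:ℝ) 1) :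
    (∀ q ∈ Set.Icc (0:ℝ) 1, g (p + p * (1 - p) * (1 - v) / (2 * β)) ≤ g q)
    ∧ g (p + p * (1 - p) * (1 - v) / (2 * β))
        = p * v + (1 - p) - p * (1 - p) * (1 - v) ^ 2 / (4 * β) := by
  obtain ⟨hp0, hp1⟩ := hp
  have h1p : (0:ℝ) < 1 - p := by linarith
  set m := p + p * (1 - p) * (1 - v) / (2 * β) with hm
  have hval : g m = p * v + (1 - p) - p * (1 - p) * (1 - v) ^ 2 / (4 * β) := by
    rw [hg, hm]
    field_simp
    ring
  refine ⟨fun q _ => ?_, hval⟩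
  have hkey : g q - g m = (β / (p * (1 - p))) * (q - m) ^ 2 := by
    rw [hg, hg, hm]
    field_simp
    ring
  have hnn : (0:ℝ) ≤ (β / (p * (1 - p))) * (q - m) ^ 2 :=
    mul_nonneg (div_nonneg hβ.le (by positivity)) (sq_nonneg _)
  linarith
end
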